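/- arXiv:2603.13170 — 7 statements merged into one kernel-verified Lean document; each statement's English description precedes it below -/
import Mathlib

section
/- Let H ∈ (0,1/2) and φ_n(t) = (1/n + t)^{H-1/2} for t ≥ 0. Then for every θ > 2 and T > 0, sup_{0 ≤ h ≤ n^{-θ}} ∫_0^T |φ_n'(h+s) - φ_n'(s)| ds ≤ 2 n^{3/2 - θ - H}, and in particular this supremum tends to 0 as n → ∞. -/
open MeasureTheory Set Filter

lemma aux_integrable {c : ℝ} (r : ℝ) (hc : 0 < c) {T : ℝ} (hT : 0 ≤ T) :
    IntervalIntegrable (fun s => (c + s) ^ r) volume 0 T := by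
  apply ContinuousOn.intervalIntegrable
  apply ContinuousOn.rpow_const (continuous_const.add continuous_id).continuousOn
  intro x hx
  rw [Set.uIcc_of_le hT] at hx
  left
  intro heq
  simp only [Pi.add_apply, id_eq] at heq
  linarith [hx.1]

lemma aux_integral {c r T : ℝ} (hc : 0 < c) (hT : 0 ≤ T) (hr : r < -1) :
    ∫ s in (0:ℝ)..T, (c + s) ^ r = ((c + T) ^ (r+1) - c ^ (r+1)) / (r+1) := by
  have h1 : (∫ s in (0:ℝ)..T, (c + s) ^ r) = ∫ s in (0:ℝ)..T, (s + c) ^ r := by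
    simp [add_comm]
  rw [h1, intervalIntegral.integral_comp_add_right (fun u => u ^ r) c]
  rw [integral_rpow (Or.inr ⟨by linarith, ?_⟩)]
  · rw [zero_add, add_comm T c]
  · rw [Set.uIcc_of_le (by linarith)]
    intro h0
    have := h0.1
    simp at this
    linarith

lemma aux_mvt {c h q : ℝ} (hc : 0 < c) (hh : 0 ≤ h) (hq : q < 0) :
    c ^ q - (c + h) ^ q ≤ (-q) * c ^ (q - 1) * h := by
  have key : ‖(c+h) ^ q - c ^ q‖ ≤ ((-q) * c ^ (q-1)) * ‖(c+h) - c‖ := by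
    apply Convex.norm_image_sub_le_of_norm_hasDerivWithin_le
      (f := fun x => x ^ q) (f' := fun x => q * x ^ (q-1)) (s := Set.Icc c (c+h))
    · intro x hx
      have hx0 : (0:ℝ) < x := lt_of_lt_of_le hc hx.1
      exact (Real.hasDerivAt_rpow_const (Or.inl hx0.ne')).hasDerivWithinAt
    · intro x hx
      have hx0 : (0:ℝ) < x := lt_of_lt_of_le hc hx.1
      rw [Real.norm_eq_abs, abs_mul, abs_of_nonpos hq.le,
        abs_of_nonneg (Real.rpow_nonneg hx0.le _)]
      have : x ^ (q-1) ≤ c ^ (q-1) :=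
        Real.rpow_le_rpow_of_nonpos hc hx.1 (by linarith)
      nlinarith
    · exact convex_Icc _ _
    · exact ⟨le_refl c, by linarith⟩
    · exact ⟨by linarith, le_refl _⟩
  rw [Real.norm_eq_abs, Real.norm_eq_abs] at key
  have h2 : |(c+h) - c| = h := by rw [abs_of_nonneg (by linarith)]; ring
  rw [h2] at key
  calc c ^ q - (c + h) ^ q ≤ |(c+h) ^ q - c ^ q| := by
        rw [abs_sub_comm]; exact le_abs_self _
    _ ≤ (-q) * c ^ (q-1) * h := key

lemma main_bound {H : ℝ} (hH1 : 0 < H) (hH2 : H < 1/2) {T : ℝ} (hT : 0 < T)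
    {c h : ℝ} (hc : 0 < c) (hh : 0 ≤ h) :
    (∫ s in (0:ℝ)..T, |(H - 1/2) * (c + (h + s)) ^ (H - 3/2)
        - (H - 1/2) * (c + s) ^ (H - 3/2)|)
      ≤ (1/2 - H) * c ^ (H - 3/2) * h := by
  have hrneg : H - 3/2 < -1 := by linarith
  have hq : H - 1/2 < 0 := by linarith
  have hch : 0 < c + h := by linarith
  have hcongr : (∫ s in (0:ℝ)..T, |(H - 1/2) * (c + (h + s)) ^ (H - 3/2)
        - (H - 1/2) * (c + s) ^ (H - 3/2)|)
      = ∫ s in (0:ℝ)..T, (1/2 - H) * ((c + s) ^ (H - 3/2) - ((c + h) + s) ^ (H - 3/2)) := by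
    apply intervalIntegral.integral_congr
    intro s hs
    rw [Set.uIcc_of_le hT.le] at hs
    have hs0 : (0:ℝ) ≤ s := hs.1
    have hle : ((c + h) + s) ^ (H - 3/2) ≤ (c + s) ^ (H - 3/2) :=
      Real.rpow_le_rpow_of_nonpos (by linarith) (by linarith) (by linarith)
    have h0 : (0:ℝ) ≤ 1/2 - H := by linarith
    have hnn : 0 ≤ (H - 1/2) * ((c + h) + s) ^ (H - 3/2)
        - (H - 1/2) * (c + s) ^ (H - 3/2) := by
      nlinarith [mul_nonneg h0 (sub_nonneg.mpr hle)]
    show |(H - 1/2) * (c + (h + s)) ^ (H - 3/2) - (H - 1/2) * (c + s) ^ (H - 3/2)|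
        = (1/2 - H) * ((c + s) ^ (H - 3/2) - ((c + h) + s) ^ (H - 3/2))
    have he : c + (h + s) = (c + h) + s := by ring
    rw [he, abs_of_nonneg hnn]
    ring
  rw [hcongr, intervalIntegral.integral_const_mul,
    intervalIntegral.integral_sub (aux_integrable (H - 3/2) hc hT.le)
      (aux_integrable (H - 3/2) hch hT.le),
    aux_integral hc hT.le hrneg, aux_integral hch hT.le hrneg]
  have hfold : (1/2 - H) * (((c + T) ^ (H - 3/2 + 1) - c ^ (H - 3/2 + 1)) / (H - 3/2 + 1)
      - ((((c + h) + T) ^ (H - 3/2 + 1) - (c + h) ^ (H - 3/2 + 1)) / (H - 3/2 + 1)))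
      = (c ^ (H - 3/2 + 1) - (c + h) ^ (H - 3/2 + 1))
        + (((c + h) + T) ^ (H - 3/2 + 1) - (c + T) ^ (H - 3/2 + 1)) := by
    have hq0 : H - 3/2 + 1 ≠ 0 := by intro hcon; linarith
    have hkd : (1/2 - H) / (H - 3/2 + 1) = -1 := by rw [div_eq_iff hq0]; ring
    have expand : ∀ X Y Z W : ℝ, (1/2 - H) * ((X - Y)/(H-3/2+1) - (Z - W)/(H-3/2+1))
        = ((1/2 - H)/(H - 3/2 + 1)) * (X - Y - Z + W) := by intro X Y Z W; ring
    rw [expand, hkd]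
    ring
  rw [hfold]
  have hq1 : H - 3/2 + 1 ≤ 0 := by linarith
  have h1 : ((c + h) + T) ^ (H - 3/2 + 1) - (c + T) ^ (H - 3/2 + 1) ≤ 0 := by
    have : ((c + h) + T) ^ (H - 3/2 + 1) ≤ (c + T) ^ (H - 3/2 + 1) :=
      Real.rpow_le_rpow_of_nonpos (by linarith) (by linarith) hq1
    linarith
  have h2 : c ^ (H - 3/2 + 1) - (c + h) ^ (H - 3/2 + 1)
      ≤ (-(H - 3/2 + 1)) * c ^ ((H - 3/2 + 1) - 1) * h :=
    aux_mvt hc hh (by linarith)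
  have h3 : (H - 3/2 + 1) - 1 = H - 3/2 := by ring
  have h4 : -(H - 3/2 + 1) = 1/2 - H := by ring
  rw [h3, h4] at h2
  linarith

/-- for `H ∈ (0,1/2)` and `φ_n'(t) = (H-1/2)(1/n+t)^(H-3/2)`,
for every `θ > 2` and `T > 0`, the supremum over `h ∈ [0, n^{-θ}]` of
`∫_0^T |φ_n'(h+s) - φ_n'(s)| ds` is bounded by `2 n^{3/2-θ-H}` and tends to `0`. -/
theorem statement0 (H : ℝ) (hH : H ∈ Set.Ioo (0:ℝ) (1/2))
    (φ' : ℕ → ℝ → ℝ)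
    (hφ' : ∀ (n : ℕ) (t : ℝ), φ' n t = (H - 1/2) * (1/(n:ℝ) + t) ^ (H - 3/2)) :
    ∀ θ : ℝ, 2 < θ → ∀ T : ℝ, 0 < T →
      (∀ n : ℕ, 1 ≤ n → ∀ h ∈ Set.Icc (0:ℝ) ((n:ℝ) ^ (-θ)),
        (∫ s in (0:ℝ)..T, |φ' n (h + s) - φ' n s|) ≤ 2 * (n:ℝ) ^ (3/2 - θ - H)) ∧
      Filter.Tendsto
        (fun n : ℕ => ⨆ h ∈ Set.Icc (0:ℝ) ((n:ℝ) ^ (-θ)),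
          ∫ s in (0:ℝ)..T, |φ' n (h + s) - φ' n s|)
        Filter.atTop (nhds 0) := by
  obtain ⟨hH1, hH2⟩ := hH
  intro θ hθ T hT
  have key : ∀ n : ℕ, 1 ≤ n → ∀ h ∈ Set.Icc (0:ℝ) ((n:ℝ) ^ (-θ)),
      (∫ s in (0:ℝ)..T, |φ' n (h + s) - φ' n s|) ≤ 2 * (n:ℝ) ^ (3/2 - θ - H) := by
    intro n hn h hmem
    have hn0 : (0:ℝ) < (n:ℝ) := by exact_mod_cast Nat.pos_of_ne_zero (by omega)
    have hc : (0:ℝ) < 1 / (n:ℝ) := by positivity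
    obtain ⟨hh0, hhub⟩ := hmem
    have step1 : (∫ s in (0:ℝ)..T, |φ' n (h + s) - φ' n s|)
        ≤ (1/2 - H) * (1/(n:ℝ)) ^ (H - 3/2) * h := by
      have := main_bound hH1 hH2 hT hc hh0
      simpa only [hφ'] using this
    have hpow : (1/(n:ℝ)) ^ (H - 3/2) = (n:ℝ) ^ (3/2 - H) := by
      rw [one_div, ← Real.rpow_neg_one, ← Real.rpow_mul hn0.le]
      congr 1
      ring
    rw [hpow] at step1
    have hA : (0:ℝ) < (n:ℝ) ^ (3/2 - H) := Real.rpow_pos_of_pos hn0 _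
    have step2 : (1/2 - H) * (n:ℝ) ^ (3/2 - H) * h
        ≤ 2 * ((n:ℝ) ^ (3/2 - H) * (n:ℝ) ^ (-θ)) := by
      have h5 : (n:ℝ) ^ (3/2 - H) * h ≤ (n:ℝ) ^ (3/2 - H) * (n:ℝ) ^ (-θ) :=
        mul_le_mul_of_nonneg_left hhub hA.le
      nlinarith [mul_nonneg hA.le hh0]
    have step3 : 2 * ((n:ℝ) ^ (3/2 - H) * (n:ℝ) ^ (-θ)) = 2 * (n:ℝ) ^ (3/2 - θ - H) := by
      rw [← Real.rpow_add hn0]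
      congr 1
      ring
    calc (∫ s in (0:ℝ)..T, |φ' n (h + s) - φ' n s|)
        ≤ (1/2 - H) * (n:ℝ) ^ (3/2 - H) * h := step1
      _ ≤ 2 * ((n:ℝ) ^ (3/2 - H) * (n:ℝ) ^ (-θ)) := step2
      _ = 2 * (n:ℝ) ^ (3/2 - θ - H) := step3
  refine ⟨key, ?_⟩
  have hnonneg : ∀ n : ℕ, 0 ≤ ⨆ h ∈ Set.Icc (0:ℝ) ((n:ℝ) ^ (-θ)),
      ∫ s in (0:ℝ)..T, |φ' n (h + s) - φ' n s| := by
    intro n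
    apply Real.iSup_nonneg
    intro h
    apply Real.iSup_nonneg
    intro _
    apply intervalIntegral.integral_nonneg hT.le
    intro s _
    exact abs_nonneg _
  have hub : ∀ᶠ n : ℕ in atTop, (⨆ h ∈ Set.Icc (0:ℝ) ((n:ℝ) ^ (-θ)),
      ∫ s in (0:ℝ)..T, |φ' n (h + s) - φ' n s|) ≤ 2 * (n:ℝ) ^ (3/2 - θ - H) := by
    filter_upwards [eventually_ge_atTop 1] with n hn
    have hb : (0:ℝ) ≤ 2 * (n:ℝ) ^ (3/2 - θ - H) := by positivity
    apply Real.iSup_le _ hb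
    intro h
    apply Real.iSup_le _ hb
    intro hmem
    exact key n hn h hmem
  have hg : Tendsto (fun n : ℕ => 2 * (n:ℝ) ^ (3/2 - θ - H)) atTop (nhds 0) := by
    have h1 : Tendsto (fun x : ℝ => x ^ (-(θ + H - 3/2))) atTop (nhds 0) :=
      tendsto_rpow_neg_atTop (by linarith)
    have h2 : Tendsto (fun n : ℕ => ((n:ℝ)) ^ (-(θ + H - 3/2))) atTop (nhds 0) :=
      h1.comp tendsto_natCast_atTop_atTop
    have h3 : (fun n : ℕ => (n:ℝ) ^ (3/2 - θ - H))
        = fun n : ℕ => ((n:ℝ)) ^ (-(θ + H - 3/2)) := by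
      funext n; congr 1; ring
    have h4 := h2.const_mul (2:ℝ)
    rw [mul_zero] at h4
    rw [show (fun n : ℕ => 2 * (n:ℝ) ^ (3/2 - θ - H))
        = fun n : ℕ => 2 * ((n:ℝ)) ^ (-(θ + H - 3/2)) by funext n; congr 2; ring]
    exact h4
  exact squeeze_zero' (Eventually.of_forall hnonneg) hub hg
end

section
/- Let H ∈ (0,1/2), β > 0, and set c₁ = (2^{2H} - 1 - 2^{2H} H)^{-1}. Then c₁ > 0 for all H ∈ (0,1/2), and the kernel φ̂_n(t) = sqrt( (t + n^{-β})^{2H-1} + c₁ ((t + n^{-β})^{2H-1} - (2 n^{-β})^{2H-1})_+ ) satisfies, for all t ≥ n^{-β}: ∫_0^t φ̂_n(t-s)² ds = (1/(2H)) (t + n^{-β})^{2H}. -/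
open MeasureTheory Set Filter

/-- The optimized kernel of the paper:
`φ̂_n(t) = sqrt((t+n^{-β})^{2H-1} + c₁((t+n^{-β})^{2H-1} - (2n^{-β})^{2H-1})₊)`. -/
noncomputable def phiHat (H β : ℝ) (n : ℕ) (t : ℝ) : ℝ :=
  Real.sqrt ((t + (n:ℝ) ^ (-β)) ^ (2*H - 1)
    + ((2:ℝ) ^ (2*H) - 1 - (2:ℝ) ^ (2*H) * H)⁻¹ *
      max ((t + (n:ℝ) ^ (-β)) ^ (2*H - 1) - (2 * (n:ℝ) ^ (-β)) ^ (2*H - 1)) 0)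

/-- `c₁ = (2^{2H}-1-2^{2H}H)^{-1} > 0` for `H ∈ (0,1/2)`, and for all
`t ≥ n^{-β}`, `∫_0^t φ̂_n(t-s)² ds = (1/(2H)) (t+n^{-β})^{2H}`. -/
theorem statement3 (H β : ℝ) (hH : H ∈ Set.Ioo (0:ℝ) (1/2)) (hβ : 0 < β)
    (n : ℕ) (hn : 1 ≤ n) :
    0 < ((2:ℝ) ^ (2*H) - 1 - (2:ℝ) ^ (2*H) * H)⁻¹ ∧
    ∀ t : ℝ, (n:ℝ) ^ (-β) ≤ t →
      (∫ s in (0:ℝ)..t, (phiHat H β n (t - s))^2)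
        = (1/(2*H)) * (t + (n:ℝ) ^ (-β)) ^ (2*H) := by
  obtain ⟨hH0, hH2⟩ := hH
  have h2H : 0 < 2*H := by linarith
  have hlog2 : 0 < Real.log 2 := Real.log_pos one_lt_two
  -- positivity of the denominator D = 2^{2H} - 1 - 2^{2H} H
  have hexp : Real.exp ((1-2*H) * 0 + (2*H) * (-Real.log 2)) <
      (1-2*H) * Real.exp 0 + (2*H) * Real.exp (-Real.log 2) :=
    strictConvexOn_exp.2 (mem_univ _) (mem_univ _) (by intro h; exact absurd h.symm (by nlinarith))
      (by linarith) h2H (by ring)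
  have hexp' : Real.exp (-(2*H * Real.log 2)) < 1 - H := by
    have h1 : Real.exp (-Real.log 2) = 2⁻¹ := by
      rw [Real.exp_neg, Real.exp_log two_pos]
    have h2 : (1-2*H) * 0 + (2*H) * (-Real.log 2) = -(2*H * Real.log 2) := by ring
    rw [h2, h1, Real.exp_zero] at hexp
    linarith
  have hP : (2:ℝ) ^ (2*H) = Real.exp (2*H * Real.log 2) := by
    rw [Real.rpow_def_of_pos two_pos, mul_comm]
  have hPpos : (0:ℝ) < (2:ℝ) ^ (2*H) := Real.rpow_pos_of_pos two_pos _
  have hD : 0 < (2:ℝ) ^ (2*H) - 1 - (2:ℝ) ^ (2*H) * H := by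
    have h3 : (2:ℝ) ^ (2*H) * Real.exp (-(2*H * Real.log 2)) = 1 := by
      rw [hP, ← Real.exp_add]; simp
    nlinarith [hPpos]
  refine ⟨inv_pos.mpr hD, ?_⟩
  intro t ht
  set ε : ℝ := (n:ℝ) ^ (-β) with hεdef
  have hnpos : (0:ℝ) < (n:ℝ) := by exact_mod_cast hn
  have hε : 0 < ε := Real.rpow_pos_of_pos hnpos _
  have ht0 : 0 < t := lt_of_lt_of_le hε ht
  set c1 : ℝ := ((2:ℝ) ^ (2*H) - 1 - (2:ℝ) ^ (2*H) * H)⁻¹ with hc1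
  set g : ℝ → ℝ := fun u => (u + ε) ^ (2*H - 1)
      + c1 * max ((u + ε) ^ (2*H - 1) - (2 * ε) ^ (2*H - 1)) 0 with hg
  -- substitution s ↦ t - s
  have hsub : (∫ s in (0:ℝ)..t, (phiHat H β n (t - s))^2)
      = ∫ u in (0:ℝ)..t, (phiHat H β n u)^2 := by
    have := intervalIntegral.integral_comp_sub_left (a := 0) (b := t)
      (fun u => (phiHat H β n u)^2) t
    simpa using this
  -- removing the square root
  have hpt : ∀ u ∈ Set.uIcc (0:ℝ) t, (phiHat H β n u)^2 = g u := by
    intro u hu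
    rw [Set.uIcc_of_le ht0.le] at hu
    have hu0 : 0 ≤ u := hu.1
    have hupos : 0 < u + ε := by linarith
    have h1 : (0:ℝ) ≤ (u + ε) ^ (2*H - 1) := Real.rpow_nonneg hupos.le _
    have h2 : (0:ℝ) ≤ c1 * max ((u + ε) ^ (2*H - 1) - (2 * ε) ^ (2*H - 1)) 0 :=
      mul_nonneg (inv_pos.mpr hD).le (le_max_right _ _)
    simp only [phiHat, g, ← hεdef, ← hc1]
    rw [Real.sq_sqrt (by linarith)]
  rw [hsub, intervalIntegral.integral_congr hpt]
  -- continuity / integrability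
  have hcont : ∀ a b : ℝ, 0 ≤ a → 0 ≤ b →
      ContinuousOn (fun u : ℝ => (u + ε) ^ (2*H - 1)) (Set.uIcc a b) ∧
      ContinuousOn g (Set.uIcc a b) := by
    intro a b ha hb
    have hbase : ContinuousOn (fun u : ℝ => u + ε) (Set.uIcc a b) :=
      (continuous_id.add continuous_const).continuousOn
    have h1 : ContinuousOn (fun u : ℝ => (u + ε) ^ (2*H - 1)) (Set.uIcc a b) := by
      apply hbase.rpow_const
      intro x hx
      have hx0 : 0 ≤ x := by
        rcases Set.mem_uIcc.mp hx with h | h <;> linarith [h.1]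
      exact Or.inl (by positivity)
    exact ⟨h1, h1.add (continuousOn_const.mul
      ((h1.sub continuousOn_const).sup continuousOn_const))⟩
  -- the basic power integral
  have hpow : ∀ a b : ℝ, (∫ u in a..b, (u + ε) ^ (2*H - 1))
      = ((b + ε) ^ (2*H) - (a + ε) ^ (2*H)) / (2*H) := by
    intro a b
    rw [intervalIntegral.integral_comp_add_right (fun x => x ^ (2*H - 1)) ε,
      integral_rpow (Or.inl (by linarith))]
    have : 2*H - 1 + 1 = 2*H := by ring
    rw [this]
  -- split at ε
  have hint1 : IntervalIntegrable g volume 0 ε :=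
    ((hcont 0 ε le_rfl hε.le).2).intervalIntegrable
  have hint2 : IntervalIntegrable g volume ε t :=
    ((hcont ε t hε.le ht0.le).2).intervalIntegrable
  rw [← intervalIntegral.integral_add_adjacent_intervals hint1 hint2]
  -- on [ε, t] the max vanishes
  have hright : (∫ u in ε..t, g u) = ∫ u in ε..t, (u + ε) ^ (2*H - 1) := by
    apply intervalIntegral.integral_congr
    intro u hu
    rw [Set.uIcc_of_le ht] at hu
    have h1 : (u + ε) ^ (2*H - 1) ≤ (2 * ε) ^ (2*H - 1) :=
      Real.rpow_le_rpow_of_nonpos (by linarith) (by linarith [hu.1]) (by linarith)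
    simp only [g]
    rw [max_eq_right (by linarith)]
    ring
  -- on [0, ε] the max is the difference
  have hleft : (∫ u in (0:ℝ)..ε, g u)
      = (1 + c1) * (∫ u in (0:ℝ)..ε, (u + ε) ^ (2*H - 1))
        - c1 * ((2 * ε) ^ (2*H - 1) * ε) := by
    have heq : Set.EqOn g (fun u => (1 + c1) * (u + ε) ^ (2*H - 1)
        - c1 * (2 * ε) ^ (2*H - 1)) (Set.uIcc 0 ε) := by
      intro u hu
      rw [Set.uIcc_of_le hε.le] at hu
      have h1 : (2 * ε) ^ (2*H - 1) ≤ (u + ε) ^ (2*H - 1) :=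
        Real.rpow_le_rpow_of_nonpos (by linarith [hu.1]) (by linarith [hu.2]) (by linarith)
      simp only [g]
      rw [max_eq_left (by linarith)]
      ring
    rw [intervalIntegral.integral_congr heq,
      intervalIntegral.integral_sub (f := fun u => (1 + c1) * (u + ε) ^ (2*H - 1))
        ((continuousOn_const.mul (hcont 0 ε le_rfl hε.le).1).intervalIntegrable)
        intervalIntegrable_const,
      intervalIntegral.integral_const_mul, intervalIntegral.integral_const]
    rw [smul_eq_mul]
    ring
  rw [hright, hleft, hpow, hpow]
  -- final algebra
  have hEE : (2 * ε) ^ (2*H) = (2:ℝ) ^ (2*H) * ε ^ (2*H) :=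
    Real.mul_rpow (by norm_num) hε.le
  have hEE' : (2 * ε) ^ (2*H - 1) * ε = (2:ℝ) ^ (2*H) * ε ^ (2*H) / 2 := by
    rw [Real.mul_rpow (by norm_num) hε.le]
    have h1 : (2:ℝ) ^ (2*H - 1) = (2:ℝ) ^ (2*H) / 2 := by
      rw [Real.rpow_sub two_pos, Real.rpow_one]
    have h2 : ε ^ (2*H - 1) * ε = ε ^ (2*H) := by
      have h3 := Real.rpow_add hε (2*H - 1) 1
      rw [Real.rpow_one] at h3
      rw [← h3]
      congr 1
      ring
    calc (2:ℝ) ^ (2*H - 1) * ε ^ (2*H - 1) * ε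
        = (2:ℝ) ^ (2*H - 1) * (ε ^ (2*H - 1) * ε) := by ring
      _ = (2:ℝ) ^ (2*H) / 2 * ε ^ (2*H) := by rw [h1, h2]
      _ = (2:ℝ) ^ (2*H) * ε ^ (2*H) / 2 := by ring
  have h2e : ε + ε = 2 * ε := by ring
  rw [h2e, hEE, hEE']
  have hDne : (2:ℝ) ^ (2*H) - 1 - (2:ℝ) ^ (2*H) * H ≠ 0 := ne_of_gt hD
  have hHne : 2*H ≠ 0 := ne_of_gt h2H
  rw [hc1]
  rw [zero_add]
  generalize (2:ℝ) ^ (2*H) = P at hDne ⊢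
  field_simp
  ring
end

section
/- Let H ∈ (0,1/2), β > 0, and φ̂_n be the optimized kernel with φ̂_n(t) = (t + n^{-β})^{H-1/2} for t ≥ n^{-β} and φ̂_n(t) ≤ (1+c₁)^{1/2}(t+n^{-β})^{H-1/2} in general, where c₁ = (2^{2H}-1-2^{2H}H)^{-1}. Then ∫_0^T |φ̂_n(t) - t^{H-1/2}| dt ≤ C n^{-β(H+1/2)} for a constant C independent of n. -/
/-!
Write `p = H - 1/2 ∈ (-1, 0)`, `ε = n^{-β}` and `K = (1 + c₁)^{1/2}`, so that
`n^{-β(H+1/2)} = ε^{p+1}`. On `(0, ε]` the two-sided bound `0 ≤ φ̂_n(t) ≤ K (t + ε)^p ≤ K t^p`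
gives `|φ̂_n(t) - t^p| ≤ (K+1) t^p`, whose integral is `(K+1) ε^{p+1}/(p+1)`. On `[ε, T]` the
kernel is the shifted power `(t + ε)^p ≤ t^p`, and the integral of `t^p - (t + ε)^p`
telescopes: it is at most the integral of `t^p` over `[ε, 2ε]`, i.e. at most
`(2ε)^{p+1}/(p+1)`.
-/

open MeasureTheory Set Filter

section ShiftedPower

variable {p ε : ℝ}

theorem abs_sub_rpow_le_of_le_mul_rpow_add {K t a : ℝ} (hp : p ≤ 0) (hε : 0 ≤ ε) (hK : 0 ≤ K)
    (ht : 0 < t) (ha₀ : 0 ≤ a) (ha : a ≤ K * (t + ε) ^ p) :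
    |a - t ^ p| ≤ (K + 1) * t ^ p := by
  have hshift : (t + ε) ^ p ≤ t ^ p := Real.rpow_le_rpow_of_nonpos ht (by linarith) hp
  have htp : 0 ≤ t ^ p := Real.rpow_nonneg ht.le p
  rw [abs_le]
  constructor <;> nlinarith

theorem integral_abs_sub_rpow_le_of_le_mul_rpow_add {K m : ℝ} {f : ℝ → ℝ} (hp₁ : -1 < p)
    (hp : p ≤ 0) (hε : 0 ≤ ε) (hK : 0 ≤ K) (hm : 0 ≤ m)
    (hf₀ : ∀ t, 0 < t → 0 ≤ f t) (hf : ∀ t, 0 < t → f t ≤ K * (t + ε) ^ p) :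
    ∫ t in (0 : ℝ)..m, |f t - t ^ p| ≤ (K + 1) * m ^ (p + 1) / (p + 1) := by
  have hbound : ∫ t in (0 : ℝ)..m, |f t - t ^ p| ≤ ∫ t in (0 : ℝ)..m, (K + 1) * t ^ p := by
    simp only [intervalIntegral.integral_of_le hm]
    refine integral_mono_of_nonneg (.of_forall fun t => abs_nonneg _)
      ((intervalIntegral.intervalIntegrable_rpow' hp₁).const_mul (K + 1)).1 ?_
    filter_upwards [ae_restrict_mem measurableSet_Ioc] with t ht
    exact abs_sub_rpow_le_of_le_mul_rpow_add hp hε hK ht.1 (hf₀ t ht.1) (hf t ht.1)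
  rwa [intervalIntegral.integral_const_mul, integral_rpow (.inl hp₁),
    Real.zero_rpow (by linarith), sub_zero, ← mul_div_assoc] at hbound

theorem integral_rpow_sub_rpow_add_le {a b : ℝ} (hp : -1 < p) (hε : 0 ≤ ε) (hb : 0 ≤ b) :
    ∫ t in a..b, (t ^ p - (t + ε) ^ p) ≤ ((a + ε) ^ (p + 1) - a ^ (p + 1)) / (p + 1) := by
  have hshift : IntervalIntegrable (fun t : ℝ => (t + ε) ^ p) volume a b := by
    simpa using
      (intervalIntegral.intervalIntegrable_rpow' (a := a + ε) (b := b + ε) hp).comp_add_right ε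
  have hgrow : b ^ (p + 1) ≤ (b + ε) ^ (p + 1) :=
    Real.rpow_le_rpow hb (by linarith) (by linarith)
  rw [intervalIntegral.integral_sub (intervalIntegral.intervalIntegrable_rpow' hp) hshift,
    intervalIntegral.integral_comp_add_right (fun t : ℝ => t ^ p), integral_rpow (.inl hp),
    integral_rpow (.inl hp), ← sub_div]
  exact div_le_div_of_nonneg_right (by linarith) (by linarith)

theorem integral_abs_sub_rpow_le_of_eq_rpow_add {T : ℝ} {f : ℝ → ℝ} (hp₁ : -1 < p) (hp : p ≤ 0)
    (hε : 0 < ε) (hεT : ε ≤ T) (hf : ∀ t, ε ≤ t → f t = (t + ε) ^ p) :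
    ∫ t in ε..T, |f t - t ^ p| ≤ 2 ^ (p + 1) * ε ^ (p + 1) / (p + 1) := by
  have habs : EqOn (fun t => |f t - t ^ p|) (fun t => t ^ p - (t + ε) ^ p) (uIcc ε T) := by
    intro t ht
    rw [uIcc_of_le hεT] at ht
    have hshift : (t + ε) ^ p ≤ t ^ p :=
      Real.rpow_le_rpow_of_nonpos (hε.trans_le ht.1) (by linarith) hp
    simp only [hf t ht.1, abs_of_nonpos (sub_nonpos.2 hshift), neg_sub]
  have htwo : (ε + ε) ^ (p + 1) = 2 ^ (p + 1) * ε ^ (p + 1) := by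
    rw [← two_mul, Real.mul_rpow zero_le_two hε.le]
  calc ∫ t in ε..T, |f t - t ^ p| = ∫ t in ε..T, (t ^ p - (t + ε) ^ p) :=
        intervalIntegral.integral_congr habs
    _ ≤ ((ε + ε) ^ (p + 1) - ε ^ (p + 1)) / (p + 1) :=
        integral_rpow_sub_rpow_add_le hp₁ hε.le (hε.le.trans hεT)
    _ ≤ 2 ^ (p + 1) * ε ^ (p + 1) / (p + 1) := by
        rw [htwo]
        gcongr
        · linarith
        · exact sub_le_self _ (by positivity)

theorem integral_abs_sub_rpow_le_mul_rpow {K T : ℝ} {f : ℝ → ℝ} (hp₁ : -1 < p) (hp : p ≤ 0)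
    (hε : 0 < ε) (hK : 0 ≤ K) (hT : 0 ≤ T)
    (hf₀ : ∀ t, 0 < t → 0 ≤ f t) (hf : ∀ t, 0 < t → f t ≤ K * (t + ε) ^ p)
    (hfar : ∀ t, ε ≤ t → f t = (t + ε) ^ p) :
    ∫ t in (0 : ℝ)..T, |f t - t ^ p| ≤ (K + 1 + 2 ^ (p + 1)) / (p + 1) * ε ^ (p + 1) := by
  have hp1 : 0 < p + 1 := by linarith
  have hnear (m : ℝ) (hm : 0 ≤ m) :=
    integral_abs_sub_rpow_le_of_le_mul_rpow_add hp₁ hp hε.le hK hm hf₀ hf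
  rcases le_or_gt T ε with hTε | hεT
  · calc ∫ t in (0 : ℝ)..T, |f t - t ^ p| ≤ (K + 1) * T ^ (p + 1) / (p + 1) := hnear T hT
      _ ≤ (K + 1) * ε ^ (p + 1) / (p + 1) := by gcongr
      _ ≤ (K + 1 + 2 ^ (p + 1)) / (p + 1) * ε ^ (p + 1) := by
        rw [div_mul_eq_mul_div]
        gcongr ?_ * _ / _
        exact le_add_of_nonneg_right (by positivity)
  by_cases hint : IntervalIntegrable (fun t => |f t - t ^ p|) volume 0 T
  · rw [← intervalIntegral.integral_add_adjacent_intervals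
      (hint.mono_set (uIcc_subset_uIcc left_mem_uIcc (mem_uIcc_of_le hε.le hεT.le)))
      (hint.mono_set (uIcc_subset_uIcc (mem_uIcc_of_le hε.le hεT.le) right_mem_uIcc))]
    calc _ ≤ (K + 1) * ε ^ (p + 1) / (p + 1) + 2 ^ (p + 1) * ε ^ (p + 1) / (p + 1) :=
          add_le_add (hnear ε hε.le) (integral_abs_sub_rpow_le_of_eq_rpow_add hp₁ hp hε hεT.le hfar)
      _ = (K + 1 + 2 ^ (p + 1)) / (p + 1) * ε ^ (p + 1) := by ring
  · rw [intervalIntegral.integral_undef hint]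
    positivity

end ShiftedPower

theorem statement5_general (H β T : ℝ) (hH : H ∈ Set.Ioo (0:ℝ) (1/2)) (hT : 0 < T)
    (φ : ℕ → ℝ → ℝ)
    (heq : ∀ n : ℕ, 1 ≤ n → ∀ t : ℝ, (n:ℝ) ^ (-β) ≤ t →
      φ n t = (t + (n:ℝ) ^ (-β)) ^ (H - 1/2))
    (hpos : ∀ (n : ℕ) (t : ℝ), 0 ≤ t → 0 ≤ φ n t)
    (hbd : ∀ n : ℕ, 1 ≤ n → ∀ t : ℝ, 0 ≤ t →
      φ n t ≤ Real.sqrt (1 + ((2:ℝ) ^ (2*H) - 1 - (2:ℝ) ^ (2*H) * H)⁻¹)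
        * (t + (n:ℝ) ^ (-β)) ^ (H - 1/2)) :
    ∃ C : ℝ, 0 < C ∧ ∀ n : ℕ, 1 ≤ n →
      (∫ t in (0:ℝ)..T, |φ n t - t ^ (H - 1/2)|) ≤ C * (n:ℝ) ^ (-β * (H + 1/2)) := by
  obtain ⟨hH₀, hH₁⟩ := hH
  set K := Real.sqrt (1 + ((2:ℝ) ^ (2*H) - 1 - (2:ℝ) ^ (2*H) * H)⁻¹)
  refine ⟨(K + 1 + 2 ^ (H - 1/2 + 1)) / (H - 1/2 + 1), div_pos (by positivity) (by linarith), fun n hn => ?_⟩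
  have hn₀ : (0 : ℝ) < n := by exact_mod_cast hn
  have hrate : (n : ℝ) ^ (-β * (H + 1/2)) = ((n : ℝ) ^ (-β)) ^ (H - 1/2 + 1) := by
    rw [← Real.rpow_mul hn₀.le]
    ring_nf
  rw [hrate]
  exact integral_abs_sub_rpow_le_mul_rpow (by linarith) (by linarith) (by positivity)
    (Real.sqrt_nonneg _) hT.le (fun t ht => hpos n t ht.le) (fun t ht => hbd n hn t ht.le)
    (heq n hn)

/-- if `φ̂_n(t) = (t+n^{-β})^{H-1/2}` for `t ≥ n^{-β}` and
`0 ≤ φ̂_n(t) ≤ (1+c₁)^{1/2}(t+n^{-β})^{H-1/2}` in general, where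
`c₁ = (2^{2H}-1-2^{2H}H)^{-1}`, then `∫_0^T |φ̂_n(t) - t^{H-1/2}| dt ≤ C n^{-β(H+1/2)}`
for a constant `C` independent of `n`. -/
theorem statement5 (H β T : ℝ) (hH : H ∈ Set.Ioo (0:ℝ) (1/2)) (hβ : 0 < β) (hT : 0 < T)
    (φ : ℕ → ℝ → ℝ)
    (heq : ∀ n : ℕ, 1 ≤ n → ∀ t : ℝ, (n:ℝ) ^ (-β) ≤ t →
      φ n t = (t + (n:ℝ) ^ (-β)) ^ (H - 1/2))
    (hpos : ∀ (n : ℕ) (t : ℝ), 0 ≤ t → 0 ≤ φ n t)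
    (hbd : ∀ n : ℕ, 1 ≤ n → ∀ t : ℝ, 0 ≤ t →
      φ n t ≤ Real.sqrt (1 + ((2:ℝ) ^ (2*H) - 1 - (2:ℝ) ^ (2*H) * H)⁻¹)
        * (t + (n:ℝ) ^ (-β)) ^ (H - 1/2)) :
    ∃ C : ℝ, 0 < C ∧ ∀ n : ℕ, 1 ≤ n →
      (∫ t in (0:ℝ)..T, |φ n t - t ^ (H - 1/2)|) ≤ C * (n:ℝ) ^ (-β * (H + 1/2)) :=
  statement5_general H β T hH hT φ heq hpos hbd
end

section
/- Let H ∈ (0,1/2) with H ≠ 1/4, β ∈ (0,1], and let φ̂_n(t) = (t + n^{-β})^{H-1/2} for t ≥ n^{-β}, with 0 ≤ φ̂_n(t) ≤ (1+c₁)^{1/2}(t+n^{-β})^{H-1/2} everywhere. Then (1/n) ∫_0^T φ̂_n(T-s)^4 ds ≤ C max(n^{-1+β-4Hβ}, n^{-1}) for a constant C not depending on n. -/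
/-!
Bounding `φ̂_n ⁴` by `K⁴ (t + a)^(4H-2)` with `a = n^(-β)` reduces the claim to the explicit integral
`∫₀ᵀ (T - s + a)^(q-1) ds = ((T + a)^q - a^q) / q` with `q = 4H - 1 ≠ 0`. For `q < 0` it is at most
`a^q / |q| = n^(β - 4Hβ) / |q|`, for `q > 0` at most `(T + 1)^q / q`; dividing by `n` gives the two
terms of the maximum.
-/

open MeasureTheory Set Filter

theorem integral_sub_add_rpow {a T q : ℝ} (ha : 0 < a) (hT : 0 ≤ T) (hq : q ≠ 0) :
    ∫ s in (0:ℝ)..T, (T - s + a) ^ (q - 1) = ((T + a) ^ q - a ^ q) / q := by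
  have hsub : ∀ s, T - s + a = T + a - s := fun s => by ring
  simp_rw [hsub]
  rw [intervalIntegral.integral_comp_sub_left (· ^ (q - 1)) (T + a), add_sub_cancel_left, sub_zero,
    integral_rpow (Or.inr ⟨by contrapose! hq; linarith, notMem_uIcc_of_lt ha (by linarith)⟩),
    sub_add_cancel]

theorem rpow_sub_rpow_div_le {a T q : ℝ} (ha0 : 0 < a) (ha1 : a ≤ 1) (hT : 0 ≤ T) (hq : q ≠ 0) :
    ((T + a) ^ q - a ^ q) / q ≤ ((T + 1) ^ q + a ^ q) / |q| := by
  have hTa : 0 < (T + a) ^ q := Real.rpow_pos_of_pos (by linarith) q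
  have haq : 0 < a ^ q := Real.rpow_pos_of_pos ha0 q
  rcases hq.lt_or_gt with hneg | hpos
  · rw [abs_of_neg hneg, ← neg_div_neg_eq]
    gcongr <;> linarith [Real.rpow_nonneg (by linarith : (0:ℝ) ≤ T + 1) q]
  · rw [abs_of_pos hpos]
    gcongr
    linarith [Real.rpow_le_rpow (by linarith) (by linarith : T + a ≤ T + 1) hpos.le]

theorem integral_pow_four_le_of_le_rpow {φ : ℝ → ℝ} {a K r T : ℝ} (ha : 0 < a) (hT : 0 ≤ T)
    (hpos : ∀ t, 0 ≤ t → 0 ≤ φ t) (hbd : ∀ t, 0 ≤ t → φ t ≤ K * (t + a) ^ r) :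
    ∫ s in (0:ℝ)..T, φ (T - s) ^ 4 ≤ K ^ 4 * ∫ s in (0:ℝ)..T, (T - s + a) ^ (4 * r) := by
  rw [← intervalIntegral.integral_const_mul, intervalIntegral.integral_of_le hT,
    intervalIntegral.integral_of_le hT]
  have hcont : ContinuousOn (fun s => K ^ 4 * (T - s + a) ^ (4 * r)) (Icc 0 T) :=
    continuousOn_const.mul <| ContinuousOn.rpow_const (by fun_prop)
      fun s hs => Or.inl (by linarith [hs.2])
  refine integral_mono_of_nonneg (Eventually.of_forall fun s => by positivity)
    (hcont.integrableOn_Icc.mono_set Ioc_subset_Icc_self)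
    (ae_restrict_of_forall_mem measurableSet_Ioc fun s hs => ?_)
  have hts : 0 ≤ T - s := by linarith [hs.2]
  calc φ (T - s) ^ 4 ≤ (K * (T - s + a) ^ r) ^ 4 := by gcongr; exacts [hpos _ hts, hbd _ hts]
    _ = K ^ 4 * (T - s + a) ^ (4 * r) := by
      rw [mul_pow, mul_comm (4:ℝ) r, ← Real.rpow_mul_natCast (by linarith)]
      norm_num

theorem statement6_general (H β T : ℝ) (hH4 : H ≠ 1/4)
    (hβ : β ∈ Set.Ioc (0:ℝ) 1) (hT : 0 < T)
    (φ : ℕ → ℝ → ℝ)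
    (hpos : ∀ (n : ℕ) (t : ℝ), 0 ≤ t → 0 ≤ φ n t)
    (hbd : ∀ n : ℕ, 1 ≤ n → ∀ t : ℝ, 0 ≤ t →
      φ n t ≤ Real.sqrt (1 + ((2:ℝ) ^ (2*H) - 1 - (2:ℝ) ^ (2*H) * H)⁻¹)
        * (t + (n:ℝ) ^ (-β)) ^ (H - 1/2)) :
    ∃ C : ℝ, 0 < C ∧ ∀ n : ℕ, 1 ≤ n →
      (1/(n:ℝ)) * (∫ s in (0:ℝ)..T, (φ n (T - s))^4)
        ≤ C * max ((n:ℝ) ^ (-1 + β - 4*H*β)) ((n:ℝ) ^ (-1 : ℝ)) := by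
  set K : ℝ := Real.sqrt (1 + ((2:ℝ) ^ (2*H) - 1 - (2:ℝ) ^ (2*H) * H)⁻¹)
  set q : ℝ := 4 * H - 1
  have hq : q ≠ 0 := by contrapose! hH4; linarith
  refine ⟨K ^ 4 * (((T + 1) ^ q + 1) / |q|) + 1, by positivity, fun n hn => ?_⟩
  have hn0 : (0:ℝ) < n := by exact_mod_cast hn
  set a : ℝ := (n:ℝ) ^ (-β)
  have ha0 : 0 < a := by positivity
  have ha1 : a ≤ 1 :=
    Real.rpow_le_one_of_one_le_of_nonpos (by exact_mod_cast hn) (by linarith [hβ.1])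
  have hint : ∫ s in (0:ℝ)..T, φ n (T - s) ^ 4 ≤ K ^ 4 * (((T + 1) ^ q + a ^ q) / |q|) :=
    calc _ ≤ K ^ 4 * ∫ s in (0:ℝ)..T, (T - s + a) ^ (4 * (H - 1/2)) :=
          integral_pow_four_le_of_le_rpow ha0 hT.le (hpos n) (hbd n hn)
      _ = K ^ 4 * (((T + a) ^ q - a ^ q) / q) := by
          rw [show 4 * (H - 1/2) = q - 1 by ring, integral_sub_add_rpow ha0 hT.le hq]
      _ ≤ _ := by gcongr K ^ 4 * ?_; exact rpow_sub_rpow_div_le ha0 ha1 hT.le hq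
  have hdecay : 1 / (n:ℝ) * a ^ q = n ^ (-1 + β - 4*H*β) := by
    rw [← Real.rpow_mul hn0.le, one_div, ← Real.rpow_neg_one, ← Real.rpow_add hn0]
    congr 1; simp only [q]; ring
  set m := max ((n:ℝ) ^ (-1 + β - 4*H*β)) ((n:ℝ) ^ (-1 : ℝ))
  have hinv : 1 / (n:ℝ) ≤ m := by rw [one_div, ← Real.rpow_neg_one]; exact le_max_right _ _
  calc 1 / (n:ℝ) * ∫ s in (0:ℝ)..T, φ n (T - s) ^ 4
      ≤ 1 / (n:ℝ) * (K ^ 4 * (((T + 1) ^ q + a ^ q) / |q|)) := by gcongr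
    _ = K ^ 4 / |q| * ((T + 1) ^ q * (1 / n) + 1 / n * a ^ q) := by ring
    _ ≤ K ^ 4 / |q| * ((T + 1) ^ q * m + m) := by
        rw [hdecay]; gcongr; exact le_max_left _ _
    _ = K ^ 4 * (((T + 1) ^ q + 1) / |q|) * m := by ring
    _ ≤ _ := by gcongr; linarith

/-- for `H ∈ (0,1/2)`, `H ≠ 1/4`, `β ∈ (0,1]`, and a kernel `φ̂_n` with
`φ̂_n(t) = (t+n^{-β})^{H-1/2}` for `t ≥ n^{-β}` and
`0 ≤ φ̂_n(t) ≤ (1+c₁)^{1/2}(t+n^{-β})^{H-1/2}` everywhere,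
`(1/n)∫_0^T φ̂_n(T-s)⁴ ds ≤ C max(n^{-1+β-4Hβ}, n^{-1})` with `C` not depending on `n`. -/
theorem statement6 (H β T : ℝ) (hH : H ∈ Set.Ioo (0:ℝ) (1/2)) (hH4 : H ≠ 1/4)
    (hβ : β ∈ Set.Ioc (0:ℝ) 1) (hT : 0 < T)
    (φ : ℕ → ℝ → ℝ)
    (heq : ∀ n : ℕ, 1 ≤ n → ∀ t : ℝ, (n:ℝ) ^ (-β) ≤ t →
      φ n t = (t + (n:ℝ) ^ (-β)) ^ (H - 1/2))
    (hpos : ∀ (n : ℕ) (t : ℝ), 0 ≤ t → 0 ≤ φ n t)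
    (hbd : ∀ n : ℕ, 1 ≤ n → ∀ t : ℝ, 0 ≤ t →
      φ n t ≤ Real.sqrt (1 + ((2:ℝ) ^ (2*H) - 1 - (2:ℝ) ^ (2*H) * H)⁻¹)
        * (t + (n:ℝ) ^ (-β)) ^ (H - 1/2)) :
    ∃ C : ℝ, 0 < C ∧ ∀ n : ℕ, 1 ≤ n →
      (1/(n:ℝ)) * (∫ s in (0:ℝ)..T, (φ n (T - s))^4)
        ≤ C * max ((n:ℝ) ^ (-1 + β - 4*H*β)) ((n:ℝ) ^ (-1 : ℝ)) :=
  statement6_general H β T hH4 hβ hT φ hpos hbd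
end

section
/- Let 𝒫 be a probability measure on ℝ² satisfying: ∫ v 𝒫 = 0, ∫ v² 𝒫 = σ_v², and ∫ e^{αv²} 𝒫 < ∞ for some α > 0. Let φ be square integrable on [0,T] with φ_n ≤ C√n pointwise and φ_n ≤ C φ pointwise (uniformly in n). Then for every k ∈ ℕ, sup_{t ∈ [0,T]} sup_{n} exp( ∫_0^t ∫_{ℝ²} n ( e^{φ_n(t-s) k v / √n} - 1 ) 𝒫(du,dv) ds ) < ∞. Consequently the log-volatility process Ṽ^{(n)}_t = ∫_0^t ∫ φ_n(t-s)(v/√n) N(n·ds,du,dv) has exponential moments of every order, uniformly in n and t ∈ [0,T]. -/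
open MeasureTheory Set Filter

lemma exp_sub_one_sub_le (x : ℝ) : Real.exp x - 1 - x ≤ x^2 * Real.exp |x| := by
  rcases le_or_gt 0 x with hx | hx
  · rw [abs_of_nonneg hx]
    have h1 : 1 - x ≤ Real.exp (-x) := by have := Real.add_one_le_exp (-x); linarith
    have h2 : Real.exp x * Real.exp (-x) = 1 := by rw [← Real.exp_add]; simp
    nlinarith [Real.exp_pos x, Real.exp_pos (-x),
      mul_le_mul_of_nonneg_left h1 (Real.exp_pos x).le]
  · rw [abs_of_neg hx]
    have h1 : 1 - x ≤ Real.exp (-x) := by have := Real.add_one_le_exp (-x); linarith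
    have h2 : Real.exp x * Real.exp (-x) = 1 := by rw [← Real.exp_add]; simp
    have h3 : Real.exp x * (1 - x) ≤ 1 := by
      calc Real.exp x * (1 - x) ≤ Real.exp x * Real.exp (-x) :=
            mul_le_mul_of_nonneg_left h1 (Real.exp_pos x).le
        _ = 1 := h2
    have h4 : Real.exp x - 1 - x ≤ x^2 := by nlinarith [Real.exp_pos x]
    have h5 : (1:ℝ) ≤ Real.exp (-x) := Real.one_le_exp (by linarith)
    nlinarith [sq_nonneg x]

lemma young_bd (α c v : ℝ) (hα : 0 < α) :
    c * |v| ≤ c^2/(2*α) + (α/2) * v^2 := by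
  have h : 2*α*(c*|v|) ≤ c^2 + α^2*v^2 := by
    nlinarith [sq_nonneg (c - α*|v|), sq_abs v]
  have h2α : (0:ℝ) < 2*α := by linarith
  calc c*|v| = (2*α*(c*|v|))/(2*α) := by field_simp
    _ ≤ (c^2 + α^2*v^2)/(2*α) := by gcongr
    _ = c^2/(2*α) + (α/2)*v^2 := by field_simp

lemma sq_le_exp' (α v : ℝ) (hα : 0 < α) : v^2 ≤ (2/α) * Real.exp ((α/2) * v^2) := by
  have h2 : (α/2) * v^2 ≤ Real.exp ((α/2)*v^2) := by
    have := Real.add_one_le_exp ((α/2) * v^2); linarith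
  calc v^2 = (2/α) * ((α/2) * v^2) := by field_simp
    _ ≤ (2/α) * Real.exp ((α/2)*v^2) := by
        apply mul_le_mul_of_nonneg_left h2 (by positivity)

set_option maxHeartbeats 1000000 in
/-- uniform bound on the moment generating function of the log-volatility.
Under the centering, variance and sub-Gaussian assumptions on `𝒫` and the uniform kernel
bounds `|φ_n| ≤ C√n` and `|φ_n| ≤ C|φ|` with `φ` square integrable on `[0,T]`, for every
`k ∈ ℕ` the quantity `exp(∫_0^t ∫ n(e^{φ_n(t-s)kv/√n} - 1) 𝒫(du,dv) ds)`, which equals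
`E[exp(k Ṽ_t^{(n)})]`, is bounded uniformly in `t ∈ [0,T]` and `n`. -/
theorem statement10 (T α σv C : ℝ) (hT : 0 < T) (hα : 0 < α) (hC : 0 < C)
    (P : Measure (ℝ × ℝ)) [IsProbabilityMeasure P]
    (hcent : ∫ x : ℝ × ℝ, x.2 ∂P = 0)
    (hvar : ∫ x : ℝ × ℝ, x.2^2 ∂P = σv^2)
    (hsubg : Integrable (fun x : ℝ × ℝ => Real.exp (α * x.2^2)) P)
    (φ : ℝ → ℝ) (hφsq : IntegrableOn (fun t => (φ t)^2) (Set.Icc 0 T))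
    (φn : ℕ → ℝ → ℝ)
    (hbd1 : ∀ n : ℕ, 1 ≤ n → ∀ t : ℝ, 0 ≤ t → |φn n t| ≤ C * Real.sqrt n)
    (hbd2 : ∀ n : ℕ, 1 ≤ n → ∀ t : ℝ, 0 ≤ t → |φn n t| ≤ C * |φ t|) :
    ∀ k : ℕ, ∃ M : ℝ, ∀ t ∈ Set.Icc (0:ℝ) T, ∀ n : ℕ, 1 ≤ n →
      Real.exp (∫ s in (0:ℝ)..t,
        ∫ x : ℝ × ℝ, (n:ℝ) * (Real.exp (φn n (t - s) * (k:ℝ) * x.2 / Real.sqrt n) - 1) ∂P)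
        ≤ M := by
  intro k
  set C' : ℝ := C * k with hC'def
  have hC'0 : 0 ≤ C' := by positivity
  set E : ℝ := Real.exp (C'^2/(2*α)) with hEdef
  set K : ℝ := (2/α) * E with hKdef
  have hK0 : 0 ≤ K := by positivity
  set Ip : ℝ := ∫ x : ℝ × ℝ, Real.exp (α * x.2^2) ∂P with hIpdef
  have hIp0 : 0 ≤ Ip := integral_nonneg fun x => (Real.exp_pos _).le
  set D : ℝ := C^2 * k^2 * K * Ip with hDdef
  have hD0 : 0 ≤ D := by positivity
  have hφInt : IntervalIntegrable (fun s => (φ s)^2) volume 0 T := by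
    apply IntegrableOn.intervalIntegrable
    rwa [uIcc_of_le hT.le]
  have hφT0 : 0 ≤ ∫ s in (0:ℝ)..T, (φ s)^2 :=
    intervalIntegral.integral_nonneg hT.le fun s _ => sq_nonneg _
  set B : ℝ := D * ∫ s in (0:ℝ)..T, (φ s)^2 with hBdef
  have hB0 : 0 ≤ B := mul_nonneg hD0 hφT0
  have hmv : AEStronglyMeasurable (fun x : ℝ × ℝ => x.2) P :=
    measurable_snd.aestronglyMeasurable
  have hv : Integrable (fun x : ℝ × ℝ => x.2) P := by
    apply Integrable.mono' ((integrable_const (1:ℝ)).add (hsubg.const_mul (1/α))) hmv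
    filter_upwards with x
    have h1 : α * x.2^2 ≤ Real.exp (α * x.2^2) := by
      have := Real.add_one_le_exp (α * x.2^2); linarith
    have h2 : x.2^2 ≤ (1/α) * Real.exp (α * x.2^2) := by
      rw [div_mul_eq_mul_div, le_div_iff₀ hα]; nlinarith
    have h3 : |x.2| ≤ 1 + x.2^2 := by nlinarith [sq_nonneg (|x.2| - 1), sq_abs x.2]
    simp only [Real.norm_eq_abs]
    calc |x.2| ≤ 1 + x.2^2 := h3
      _ ≤ 1 + (1/α) * Real.exp (α * x.2^2) := by linarith
  refine ⟨Real.exp B, ?_⟩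
  rintro t ⟨ht0, htT⟩ n hn
  set F : ℝ → ℝ := fun s =>
    ∫ x : ℝ × ℝ, (n:ℝ) * (Real.exp (φn n (t - s) * (k:ℝ) * x.2 / Real.sqrt n) - 1) ∂P
    with hFdef
  rw [Real.exp_le_exp]
  have hn0 : (0:ℝ) < n := by exact_mod_cast hn
  have hsn : (0:ℝ) < Real.sqrt n := Real.sqrt_pos.mpr hn0
  have key : ∀ s ∈ Icc (0:ℝ) t, F s ≤ D * (φ (t - s))^2 := by
    intro s hs
    obtain ⟨hs0, hst⟩ := hs
    have hts : 0 ≤ t - s := by linarith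
    set y : ℝ := φn n (t - s) * (k:ℝ) / Real.sqrt n with hydef
    have hy1 : |y| ≤ C' := by
      rw [hydef, abs_div, abs_mul, abs_of_nonneg (Nat.cast_nonneg k : (0:ℝ) ≤ k),
        abs_of_pos hsn, div_le_iff₀ hsn]
      calc |φn n (t - s)| * (k:ℝ) ≤ (C * Real.sqrt n) * k :=
            mul_le_mul_of_nonneg_right (hbd1 n hn _ hts) (Nat.cast_nonneg k)
        _ = C * k * Real.sqrt n := by ring
    have habs : |y| ≤ C * |φ (t - s)| * (k:ℝ) / Real.sqrt n := by
      rw [hydef, abs_div, abs_mul, abs_of_nonneg (Nat.cast_nonneg k : (0:ℝ) ≤ k),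
        abs_of_pos hsn]
      gcongr
      exact hbd2 n hn _ hts
    have hy2 : (n:ℝ) * y^2 ≤ C^2 * k^2 * (φ (t - s))^2 := by
      have h1 : y^2 ≤ (C * |φ (t - s)| * (k:ℝ) / Real.sqrt n)^2 := by
        rw [← sq_abs y]
        exact pow_le_pow_left₀ (abs_nonneg y) habs 2
      have h2 : (C * |φ (t - s)| * (k:ℝ) / Real.sqrt n)^2
          = C^2 * k^2 * (φ (t - s))^2 / n := by
        rw [div_pow, Real.sq_sqrt hn0.le]
        congr 1
        rw [mul_pow, mul_pow, sq_abs]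
        ring
      calc (n:ℝ) * y^2 ≤ (n:ℝ) * (C^2 * k^2 * (φ (t - s))^2 / n) := by
            rw [← h2]; exact mul_le_mul_of_nonneg_left h1 hn0.le
        _ = C^2 * k^2 * (φ (t - s))^2 := by field_simp
    have harg : ∀ x : ℝ × ℝ, φn n (t - s) * (k:ℝ) * x.2 / Real.sqrt n = y * x.2 := by
      intro x; rw [hydef]; ring
    have hFeq : F s = ∫ x : ℝ × ℝ, (n:ℝ) * (Real.exp (y * x.2) - 1) ∂P := by
      rw [hFdef]; simp only [harg]
    have hexp_bd : ∀ v : ℝ, Real.exp (y * v) ≤ E * Real.exp (α * v^2) := by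
      intro v
      have h1 : y * v ≤ C' * |v| := by
        calc y * v ≤ |y * v| := le_abs_self _
          _ = |y| * |v| := abs_mul _ _
          _ ≤ C' * |v| := mul_le_mul_of_nonneg_right hy1 (abs_nonneg v)
      have h2 : C' * |v| ≤ C'^2/(2*α) + (α/2) * v^2 := young_bd α C' v hα
      rw [hEdef, ← Real.exp_add]
      apply Real.exp_le_exp.mpr
      nlinarith [sq_nonneg v]
    have hIexp : Integrable (fun x : ℝ × ℝ => Real.exp (y * x.2)) P := by
      apply Integrable.mono' (hsubg.const_mul E)
      · exact (Real.continuous_exp.comp (continuous_const.mul continuous_snd)).aestronglyMeasurable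
      · filter_upwards with x
        rw [Real.norm_eq_abs, abs_of_pos (Real.exp_pos _)]
        exact hexp_bd x.2
    have hfInt : Integrable (fun x : ℝ × ℝ => (n:ℝ) * (Real.exp (y * x.2) - 1 - y * x.2)) P :=
      ((hIexp.sub (integrable_const 1)).sub (hv.const_mul y)).const_mul n
    have hsplit : F s = ∫ x : ℝ × ℝ, (n:ℝ) * (Real.exp (y * x.2) - 1 - y * x.2) ∂P := by
      rw [hFeq]
      have heq : (fun x : ℝ × ℝ => (n:ℝ) * (Real.exp (y * x.2) - 1)) =
          fun x : ℝ × ℝ => (n:ℝ) * (Real.exp (y * x.2) - 1 - y * x.2) + ((n:ℝ) * y) * x.2 := by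
        funext x; ring
      rw [heq, integral_add hfInt (hv.const_mul ((n:ℝ) * y)), integral_const_mul,
        integral_const_mul, hcent, mul_zero, add_zero]
    rw [hsplit]
    have hbound : ∀ x : ℝ × ℝ, (n:ℝ) * (Real.exp (y * x.2) - 1 - y * x.2) ≤
        (C^2 * k^2 * (φ (t - s))^2 * K) * Real.exp (α * x.2^2) := by
      intro x
      set v := x.2 with hvdef
      have h1 : Real.exp (y*v) - 1 - y*v ≤ (y*v)^2 * Real.exp |y*v| := exp_sub_one_sub_le (y*v)
      have h2 : Real.exp |y*v| ≤ Real.exp (C' * |v|) := by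
        apply Real.exp_le_exp.mpr
        rw [abs_mul]
        exact mul_le_mul_of_nonneg_right hy1 (abs_nonneg v)
      have h3 : v^2 * Real.exp (C' * |v|) ≤ K * Real.exp (α * v^2) := by
        have hy3 : C' * |v| ≤ C'^2/(2*α) + (α/2) * v^2 := young_bd α C' v hα
        have h4 : v^2 ≤ (2/α) * Real.exp ((α/2) * v^2) := sq_le_exp' α v hα
        calc v^2 * Real.exp (C' * |v|)
            ≤ ((2/α) * Real.exp ((α/2) * v^2)) * Real.exp (C'^2/(2*α) + (α/2) * v^2) :=
              mul_le_mul h4 (Real.exp_le_exp.mpr hy3) (Real.exp_pos _).le (by positivity)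
          _ = K * Real.exp (α * v^2) := by
              have harith : α/2*v^2 + (C'^2/(2*α) + α/2*v^2) = C'^2/(2*α) + α*v^2 := by ring
              rw [hKdef, hEdef, mul_assoc, ← Real.exp_add, harith, Real.exp_add, ← mul_assoc]
      calc (n:ℝ) * (Real.exp (y*v) - 1 - y*v) ≤ (n:ℝ) * ((y*v)^2 * Real.exp |y*v|) :=
            mul_le_mul_of_nonneg_left h1 hn0.le
        _ = ((n:ℝ) * y^2) * (v^2 * Real.exp |y*v|) := by ring
        _ ≤ (C^2 * k^2 * (φ (t - s))^2) * (v^2 * Real.exp (C' * |v|)) := by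
            apply mul_le_mul hy2 (mul_le_mul_of_nonneg_left h2 (sq_nonneg v))
              (by positivity) (by positivity)
        _ ≤ (C^2 * k^2 * (φ (t - s))^2) * (K * Real.exp (α * v^2)) :=
            mul_le_mul_of_nonneg_left h3 (by positivity)
        _ = (C^2 * k^2 * (φ (t - s))^2 * K) * Real.exp (α * v^2) := by ring
    have hnn : ∀ x : ℝ × ℝ, 0 ≤ (n:ℝ) * (Real.exp (y * x.2) - 1 - y * x.2) := by
      intro x
      have h := Real.add_one_le_exp (y * x.2)
      have h' : 0 ≤ Real.exp (y * x.2) - 1 - y * x.2 := by linarith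
      exact mul_nonneg hn0.le h'
    calc (∫ x : ℝ × ℝ, (n:ℝ) * (Real.exp (y * x.2) - 1 - y * x.2) ∂P)
        ≤ ∫ x : ℝ × ℝ, (C^2 * k^2 * (φ (t - s))^2 * K) * Real.exp (α * x.2^2) ∂P :=
          integral_mono_of_nonneg (Filter.Eventually.of_forall hnn)
            (hsubg.const_mul _) (Filter.Eventually.of_forall hbound)
      _ = (C^2 * k^2 * (φ (t - s))^2 * K) * Ip := by rw [integral_const_mul]
      _ = D * (φ (t - s))^2 := by rw [hDdef]; ring
  by_cases hIntF : IntervalIntegrable F volume 0 t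
  · have hGInt : IntervalIntegrable (fun s => D * (φ (t - s))^2) volume 0 t := by
      have h1 : IntervalIntegrable (fun s => (φ (t - s))^2) volume (t - 0) (t - T) :=
        hφInt.comp_sub_left t
      have h2 : IntervalIntegrable (fun s => (φ (t - s))^2) volume 0 t := by
        apply h1.symm.mono_set
        rw [uIcc_of_le ht0, uIcc_of_le (by linarith : t - T ≤ t - 0)]
        intro x hx
        exact ⟨by linarith [hx.1, hx.2], by simpa using hx.2⟩
      exact h2.const_mul D
    calc (∫ s in (0:ℝ)..t, F s) ≤ ∫ s in (0:ℝ)..t, D * (φ (t - s))^2 :=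
          intervalIntegral.integral_mono_on ht0 hIntF hGInt key
      _ = D * ∫ s in (0:ℝ)..t, (φ (t - s))^2 := intervalIntegral.integral_const_mul _ _
      _ = D * ∫ u in (0:ℝ)..t, (φ u)^2 := by
          rw [intervalIntegral.integral_comp_sub_left (fun u => (φ u)^2) t]
          norm_num
      _ ≤ D * ∫ u in (0:ℝ)..T, (φ u)^2 := by
          apply mul_le_mul_of_nonneg_left ?_ hD0
          apply intervalIntegral.integral_mono_interval le_rfl ht0 htT ?_ hφInt
          filter_upwards with u
          exact sq_nonneg _
      _ = B := rfl
  · rw [intervalIntegral.integral_undef hIntF]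
    exact hB0
end

section
/- Let H ∈ (0,1/2). Define c_H = (Γ(2H+1) sin(πH))^{-1/2} Γ(H+1/2) and, for a two-sided standard Brownian motion B, B^H_t = c_H^{-1} [ ∫_0^t (t-s)^{H-1/2} dB_s + ∫_{-∞}^0 ((t-s)^{H-1/2} − (−s)^{H-1/2}) dB_s ]. Then for all s,t ≥ 0: E[B^H_t B^H_s] = (1/2)(t^{2H} + s^{2H} − |t−s|^{2H}); equivalently, the deterministic identity c_H^{-2}[ ∫_0^{s∧t} (t−r)^{H-1/2}(s−r)^{H-1/2} dr + ∫_0^∞ ((t+r)^{H-1/2} − r^{H-1/2})((s+r)^{H-1/2} − r^{H-1/2}) dr ] = (1/2)(t^{2H} + s^{2H} − |t−s|^{2H}) holds. -/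
open MeasureTheory Set Filter

noncomputable def pp (p x : ℝ) : ℝ := (max x 0) ^ p

lemma pp_of_pos {p x : ℝ} (hx : 0 < x) : pp p x = x ^ p := by
  rw [pp, max_eq_left hx.le]

lemma pp_of_nonpos {p x : ℝ} (hp : p ≠ 0) (hx : x ≤ 0) : pp p x = 0 := by
  rw [pp, max_eq_right hx, Real.zero_rpow hp]

lemma pp_nonneg (p x : ℝ) : 0 ≤ pp p x := Real.rpow_nonneg (le_max_right _ _) _

lemma measurable_pp (p : ℝ) : Measurable (pp p) := by unfold pp; fun_prop

lemma pp_sq {p : ℝ} (hp : p ≠ 0) (x : ℝ) : pp p x ^ 2 = pp (2 * p) x := by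
  rcases le_or_gt x 0 with h | h
  · rw [pp_of_nonpos hp h, pp_of_nonpos (by positivity) h]; ring
  · rw [pp_of_pos h, pp_of_pos h, ← Real.rpow_natCast (x ^ p) 2, ← Real.rpow_mul h.le]
    norm_num [mul_comm]

/-- `x ↦ pp p x` is interval integrable when `p > -1`. -/
lemma intervalIntegrable_pp {p : ℝ} (hp : -1 < p) (hp0 : p ≠ 0) (A B : ℝ) :
    IntervalIntegrable (pp p) volume A B := by
  apply (intervalIntegral.intervalIntegrable_rpow' hp).norm.mono_fun
    ((measurable_pp p).aestronglyMeasurable)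
  filter_upwards with x
  rcases le_or_gt x 0 with h | h
  · simp [pp_of_nonpos hp0 h]
  · simp [pp_of_pos h, Real.rpow_nonneg h.le, abs_of_nonneg, le_abs_self]

/-- Mandelbrot–van Ness kernel. -/
noncomputable def mvn (a t r : ℝ) : ℝ := pp a (t - r) - pp a (-r)

lemma measurable_mvn (a t : ℝ) : Measurable (mvn a t) := by
  unfold mvn pp; fun_prop

lemma mvn_of_gt {a t r : ℝ} (ha : a ≠ 0) (h : t ≤ r) (h0 : 0 ≤ r) : mvn a t r = 0 := by
  rw [mvn, pp_of_nonpos ha (by linarith), pp_of_nonpos ha (by linarith), sub_zero]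

/-- key difference bound: `|(t+x)^p − x^p| ≤ |p| t x^(p−1)` for `0 < x`, `0 ≤ t`, `p ≤ 1`. -/
lemma rpow_add_sub_rpow_le {p x t : ℝ} (hp : p ≤ 1) (hx : 0 < x) (ht : 0 ≤ t) :
    |(t + x) ^ p - x ^ p| ≤ |p| * t * x ^ (p - 1) := by
  have hder : ∀ u ∈ uIcc x (t + x), HasDerivAt (fun y : ℝ => y ^ p) (p * u ^ (p - 1)) u := by
    intro u hu
    have hu0 : 0 < u := by
      rcases hu with ⟨h1, _⟩
      have : min x (t + x) ≤ u := h1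
      have : (0:ℝ) < min x (t + x) := lt_min hx (by linarith)
      linarith [le_trans this.le h1]
    exact Real.hasDerivAt_rpow_const (Or.inl hu0.ne')
  have hint : IntervalIntegrable (fun u : ℝ => p * u ^ (p - 1)) volume x (t + x) := by
    apply ContinuousOn.intervalIntegrable
    intro u hu
    have hu0 : 0 < u := by
      have h1 : min x (t + x) ≤ u := hu.1
      have : (0:ℝ) < min x (t + x) := lt_min hx (by linarith)
      linarith
    exact (continuousAt_const.mul (Real.continuousAt_rpow_const u (p-1) (Or.inl hu0.ne'))).continuousWithinAt
  have heq := intervalIntegral.integral_eq_sub_of_hasDerivAt hder hint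
  have hb : ∀ u ∈ uIoc x (t + x), ‖p * u ^ (p - 1)‖ ≤ |p| * x ^ (p - 1) := by
    intro u hu
    have hxu : x ≤ u := by
      rcases hu with ⟨h1, _⟩
      have : min x (t + x) ≤ x := min_le_left _ _
      have hmin : min x (t + x) = x := min_eq_left (by linarith)
      rw [hmin] at h1; exact h1.le
    have hu0 : 0 < u := lt_of_lt_of_le hx hxu
    rw [norm_mul, Real.norm_eq_abs, Real.norm_eq_abs, abs_of_nonneg (Real.rpow_nonneg hu0.le _)]
    exact mul_le_mul_of_nonneg_left
      (Real.rpow_le_rpow_of_nonpos hx hxu (by linarith)) (abs_nonneg p)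
  have := intervalIntegral.norm_integral_le_of_norm_le_const hb
  rw [heq] at this
  simp only [Real.norm_eq_abs] at this
  calc |(t + x) ^ p - x ^ p| ≤ |p| * x ^ (p - 1) * |t + x - x| := this
    _ = |p| * t * x ^ (p - 1) := by rw [add_sub_cancel_right, abs_of_nonneg ht]; ring

/-- the kernel bound at `-r = x > 0`:  `|mvn a t (-x)| ≤ |a| t x^(a-1)` -/
lemma mvn_bound {a t x : ℝ} (ha : a ≤ 1) (ht : 0 ≤ t) (hx : 0 < x) :
    |mvn a t (-x)| ≤ |a| * t * x ^ (a - 1) := by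
  have h1 : mvn a t (-x) = (t + x) ^ a - x ^ a := by
    rw [mvn, pp_of_pos (by linarith : (0:ℝ) < t - -x), pp_of_pos (by linarith : (0:ℝ) < -(-x))]
    ring_nf
  rw [h1]
  exact rpow_add_sub_rpow_le ha hx ht
lemma integrableOn_pp_comp_sub {p c A B : ℝ} (hp : -1 < p) (hp0 : p ≠ 0) (hAB : A ≤ B) :
    IntegrableOn (fun r => pp p (c - r)) (Icc A B) := by
  have h := (intervalIntegrable_pp hp hp0 (c - A) (c - B)).comp_sub_left c
  simp only [sub_sub_cancel] at h
  rw [intervalIntegrable_iff_integrableOn_Ioc_of_le hAB] at h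
  exact (integrableOn_Icc_iff_integrableOn_Ioc).mpr h

lemma integrableOn_rpow_neg_tail {p : ℝ} (hp : p < -1) :
    IntegrableOn (fun r : ℝ => (-r) ^ p) (Iio (-1)) := by
  have h : IntegrableOn (fun x : ℝ => x ^ p) (Ioi 1) := integrableOn_Ioi_rpow_of_lt hp one_pos
  have e : MeasurableEmbedding fun x : ℝ => -x :=
    (Homeomorph.neg ℝ).isClosedEmbedding.measurableEmbedding
  have h2 := (e.integrableOn_map_iff (f := fun x : ℝ => x ^ p) (μ := volume) (s := Ioi 1)).mp
  rw [Measure.map_neg_eq_self] at h2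
  have h3 := h2 h
  have hpre : (fun x : ℝ => -x) ⁻¹' (Ioi (1:ℝ)) = Iio (-1) := by
    ext r; constructor <;> intro hr <;> simp only [mem_preimage, mem_Ioi, mem_Iio] at * <;> linarith
  rw [hpre] at h3
  exact h3.congr_fun (fun x _ => rfl) measurableSet_Iio

lemma integrable_mvn_sq {a : ℝ} (ha1 : -(1/2 : ℝ) < a) (ha2 : a < 0) {t : ℝ} (ht : 0 ≤ t) :
    Integrable (fun r => mvn a t r ^ 2) := by
  have hmeas : Measurable fun r => mvn a t r ^ 2 := (measurable_mvn a t).pow_const 2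
  rw [← integrableOn_univ, ← Iio_union_Ici (a := (-1:ℝ))]
  apply IntegrableOn.union
  · -- tail r < -1
    apply Integrable.mono' (g := fun r => (a * t) ^ 2 * (-r) ^ (2 * a - 2))
      ((integrableOn_rpow_neg_tail (by linarith)).const_mul _)
      hmeas.aestronglyMeasurable.restrict
    rw [ae_restrict_iff' measurableSet_Iio]
    filter_upwards with r hr
    have hx : (0:ℝ) < -r := by simp only [mem_Iio] at hr; linarith
    have hb := mvn_bound (t := t) (by linarith : a ≤ 1) ht hx
    rw [neg_neg (r)] at hb
    have h2 : |mvn a t r| ^ 2 ≤ (|a| * t * (-r) ^ (a - 1)) ^ 2 :=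
      pow_le_pow_left₀ (abs_nonneg _) hb 2
    have h3 : ((-r) ^ (a - 1)) ^ 2 = (-r) ^ (2 * a - 2) := by
      rw [← Real.rpow_natCast ((-r) ^ (a-1)) 2, ← Real.rpow_mul hx.le,
        show (a-1)*((2:ℕ):ℝ) = 2*a-2 by push_cast; ring]
    have h4 : ‖mvn a t r ^ 2‖ = |mvn a t r| ^ 2 := by rw [Real.norm_eq_abs, abs_pow]
    rw [h4]
    calc |mvn a t r| ^ 2 ≤ (|a| * t * (-r) ^ (a - 1)) ^ 2 := h2
      _ = (a * t) ^ 2 * (-r) ^ (2 * a - 2) := by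
          rw [mul_pow, mul_pow, sq_abs, ← h3]; ring
  · rw [← Icc_union_Ioi_eq_Ici (by linarith : (-1:ℝ) ≤ t)]
    apply IntegrableOn.union
    · -- middle [-1, t]
      apply Integrable.mono'
        (g := fun r => 2 * pp (2*a) (t - r) + 2 * pp (2*a) (0 - r))
        (((integrableOn_pp_comp_sub (by linarith) (by linarith) (by linarith)).const_mul 2).add
          ((integrableOn_pp_comp_sub (by linarith) (by linarith) (by linarith)).const_mul 2))
        hmeas.aestronglyMeasurable.restrict
      filter_upwards with r
      rw [Real.norm_eq_abs, abs_pow, sq_abs, mvn]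
      have e1 : pp a (t - r) ^ 2 = pp (2*a) (t - r) := pp_sq ha2.ne _
      have e2 : pp a (-r) ^ 2 = pp (2*a) (0 - r) := by rw [pp_sq ha2.ne, zero_sub]
      nlinarith [sq_nonneg (pp a (t - r) + pp a (-r)), pp_nonneg a (t - r), pp_nonneg a (-r)]
    · -- right tail: zero
      apply (integrable_zero _ _ _).integrableOn.congr_fun ?_ measurableSet_Ioi
      intro r hr
      rw [mem_Ioi] at hr
      simp only [mvn_of_gt ha2.ne hr.le (le_trans ht hr.le)]
      norm_num

lemma integrable_mvn_mul {a : ℝ} (ha1 : -(1/2 : ℝ) < a) (ha2 : a < 0) {t s : ℝ}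
    (ht : 0 ≤ t) (hs : 0 ≤ s) :
    Integrable (fun r => mvn a t r * mvn a s r) := by
  apply Integrable.mono' ((integrable_mvn_sq ha1 ha2 ht).add (integrable_mvn_sq ha1 ha2 hs))
    (((measurable_mvn a t).mul (measurable_mvn a s)).aestronglyMeasurable)
  filter_upwards with r
  rw [Real.norm_eq_abs, Pi.mul_apply, abs_mul]
  simp only [Pi.add_apply]
  nlinarith [sq_nonneg (|mvn a t r| - |mvn a s r|), sq_abs (mvn a t r), sq_abs (mvn a s r),
    abs_nonneg (mvn a t r), abs_nonneg (mvn a s r)]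
lemma mvn_neg_eq {a t x : ℝ} (ht : 0 ≤ t) (hx : 0 < x) :
    mvn a t (-x) = (t + x) ^ a - x ^ a := by
  rw [mvn, show t - -x = t + x by ring, neg_neg, pp_of_pos (by linarith), pp_of_pos hx]

/-- decomposition of the full-line integral into the two integrals of the statement. -/
lemma integral_mvn_mul_eq {a s t : ℝ} (ha1 : -(1/2 : ℝ) < a) (ha2 : a < 0)
    (hs : 0 ≤ s) (hst : s ≤ t) :
    ∫ r, mvn a t r * mvn a s r
      = (∫ r in (0:ℝ)..(min s t), (t - r) ^ a * (s - r) ^ a)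
        + ∫ r in Ioi (0:ℝ), ((t + r) ^ a - r ^ a) * ((s + r) ^ a - r ^ a) := by
  have ht : 0 ≤ t := le_trans hs hst
  have hint := integrable_mvn_mul ha1 ha2 ht hs
  have hsplit : ∫ r, mvn a t r * mvn a s r
      = (∫ r in Iic (0:ℝ), mvn a t r * mvn a s r)
        + ∫ r in Ioi (0:ℝ), mvn a t r * mvn a s r := by
    rw [← setIntegral_union (Iic_disjoint_Ioi le_rfl) measurableSet_Ioi
      hint.integrableOn hint.integrableOn, Iic_union_Ioi, setIntegral_univ]
  rw [hsplit]
  have hA : (∫ r in Iic (0:ℝ), mvn a t r * mvn a s r)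
      = ∫ r in Ioi (0:ℝ), ((t + r) ^ a - r ^ a) * ((s + r) ^ a - r ^ a) := by
    have h0 := integral_comp_neg_Iic (0:ℝ) (fun x => mvn a t (-x) * mvn a s (-x))
    simp only [neg_neg, neg_zero] at h0
    rw [h0]
    apply setIntegral_congr_fun measurableSet_Ioi
    intro x hx
    rw [mem_Ioi] at hx
    show mvn a t (-x) * mvn a s (-x) = ((t + x) ^ a - x ^ a) * ((s + x) ^ a - x ^ a)
    rw [mvn_neg_eq ht hx, mvn_neg_eq hs hx]
  have hB : (∫ r in Ioi (0:ℝ), mvn a t r * mvn a s r)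
      = ∫ r in (0:ℝ)..(min s t), (t - r) ^ a * (s - r) ^ a := by
    rw [min_eq_left hst]
    have hsplit2 : Ioc (0:ℝ) s ∪ Ioi s = Ioi 0 := Ioc_union_Ioi_eq_Ioi hs
    rw [← hsplit2, setIntegral_union (Ioc_disjoint_Ioi le_rfl) measurableSet_Ioi
      hint.integrableOn hint.integrableOn]
    have hz : (∫ r in Ioi s, mvn a t r * mvn a s r) = 0 := by
      rw [← integral_zero ℝ ℝ (μ := volume.restrict (Ioi s))]
      apply setIntegral_congr_fun measurableSet_Ioi
      intro r hr
      rw [mem_Ioi] at hr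
      show mvn a t r * mvn a s r = 0
      rw [mvn_of_gt ha2.ne hr.le (le_trans hs hr.le), mul_zero]
    rw [hz, add_zero, intervalIntegral.integral_of_le hs,
      integral_Ioc_eq_integral_Ioo, integral_Ioc_eq_integral_Ioo]
    apply setIntegral_congr_fun measurableSet_Ioo
    intro r hr
    obtain ⟨hr0, hrs⟩ := hr
    show mvn a t r * mvn a s r = (t - r) ^ a * (s - r) ^ a
    rw [mvn, mvn, pp_of_pos (by linarith : (0:ℝ) < t - r), pp_of_pos (by linarith : (0:ℝ) < s - r),
      pp_of_nonpos ha2.ne (by linarith : -r ≤ 0)]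
    ring
  rw [hA, hB]
  ring

lemma mvn_sub (a t s r : ℝ) : mvn a t r - mvn a s r = mvn a (t - s) (r - s) := by
  simp only [mvn]
  rw [show t - s - (r - s) = t - r by ring, show -(r - s) = s - r by ring]
  ring

lemma integral_mvn_sub_sq (a t s : ℝ) :
    ∫ r, (mvn a t r - mvn a s r) ^ 2 = ∫ r, mvn a (t - s) r ^ 2 := by
  simp_rw [mvn_sub]
  exact integral_sub_right_eq_self (fun r => mvn a (t - s) r ^ 2) s

lemma mvn_scale {a t : ℝ} (ht : 0 < t) (u : ℝ) :
    mvn a t (t * u) = t ^ a * mvn a 1 u := by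
  have key : ∀ x : ℝ, (max (t * x) 0) ^ a = t ^ a * (max x 0) ^ a := by
    intro x
    rw [show max (t * x) 0 = t * max x 0 by rw [mul_max_of_nonneg _ _ ht.le, mul_zero],
      Real.mul_rpow ht.le (le_max_right _ _)]
  rw [mvn, mvn, pp, pp, pp, pp, show t - t * u = t * (1 - u) by ring,
    show -(t * u) = t * (-u) by ring, key, key]
  ring

lemma integral_mvn_sq_scale {a t : ℝ} (ht : 0 < t) :
    ∫ r, mvn a t r ^ 2 = t ^ (2 * a + 1) * ∫ r, mvn a 1 r ^ 2 := by
  have h := MeasureTheory.Measure.integral_comp_mul_left (fun r => mvn a t r ^ 2) t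
  simp only [smul_eq_mul] at h
  have h2 : ∀ u, mvn a t (t * u) ^ 2 = t ^ (2 * a) * mvn a 1 u ^ 2 := by
    intro u
    rw [mvn_scale ht, mul_pow, ← Real.rpow_natCast (t ^ a) 2, ← Real.rpow_mul ht.le,
      show a * ((2:ℕ):ℝ) = 2 * a by push_cast; ring]
  simp_rw [h2] at h
  rw [integral_const_mul] at h
  rw [abs_of_pos (inv_pos.mpr ht)] at h
  have hX : ∫ r, mvn a t r ^ 2 = t * (t ^ (2 * a) * ∫ r, mvn a 1 r ^ 2) := by
    rw [h, ← mul_assoc, mul_inv_cancel₀ ht.ne', one_mul]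
  rw [hX, Real.rpow_add ht, Real.rpow_one]
  ring
lemma real_beta {u v : ℝ} (hu : 0 < u) (hv : 0 < v) :
    ∫ y in (0:ℝ)..1, y ^ (u - 1) * (1 - y) ^ (v - 1)
      = Real.Gamma u * Real.Gamma v / Real.Gamma (u + v) := by
  have h := Complex.Gamma_mul_Gamma_eq_betaIntegral (s := (u:ℂ)) (t := (v:ℂ))
    (by simpa using hu) (by simpa using hv)
  have hbeta : Complex.betaIntegral u v
      = ((∫ y in (0:ℝ)..1, y ^ (u - 1) * (1 - y) ^ (v - 1)) : ℝ) := by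
    rw [Complex.betaIntegral, ← intervalIntegral.integral_ofReal]
    apply intervalIntegral.integral_congr
    intro x hx
    rw [uIcc_of_le zero_le_one] at hx
    obtain ⟨hx0, hx1⟩ := hx
    show (↑x ^ ((u:ℂ) - 1) * (1 - ↑x) ^ ((v:ℂ) - 1) : ℂ)
      = ((x ^ (u - 1) * (1 - x) ^ (v - 1) : ℝ) : ℂ)
    rw [Complex.ofReal_mul, Complex.ofReal_cpow hx0,
      Complex.ofReal_cpow (by linarith : (0:ℝ) ≤ 1 - x)]
    push_cast
    ring
  rw [hbeta, ← Complex.ofReal_add, Complex.Gamma_ofReal, Complex.Gamma_ofReal,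
    Complex.Gamma_ofReal, ← Complex.ofReal_mul, ← Complex.ofReal_mul] at h
  have h2 := Complex.ofReal_injective h
  have hpos : Real.Gamma (u + v) ≠ 0 := (Real.Gamma_pos_of_pos (by linarith)).ne'
  field_simp
  linarith [h2]

lemma K_eval {a : ℝ} (ha1 : -(1/2:ℝ) < a) (ha2 : a < 0) :
    ∫ x in Ioi (0:ℝ), x ^ a * (1 + x) ^ (a - 1)
      = Real.Gamma (-2 * a) * Real.Gamma (a + 1) / Real.Gamma (1 - a) := by
  have himg : (fun y : ℝ => y⁻¹ - 1) '' (Ioo 0 1) = Ioi 0 := by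
    ext x
    constructor
    · rintro ⟨y, ⟨hy0, hy1⟩, rfl⟩
      rw [mem_Ioi]
      have : 1 < y⁻¹ := (one_lt_inv₀ hy0).mpr hy1
      linarith
    · intro hx
      rw [mem_Ioi] at hx
      refine ⟨(x + 1)⁻¹, ⟨by positivity, ?_⟩, ?_⟩
      · rw [inv_lt_one_iff₀]; right; linarith
      · show ((x + 1)⁻¹)⁻¹ - 1 = x
        rw [inv_inv]; ring
  have hderiv : ∀ y ∈ Ioo (0:ℝ) 1, HasDerivWithinAt (fun y : ℝ => y⁻¹ - 1) (-(y^2)⁻¹) (Ioo 0 1) y := by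
    intro y hy
    exact ((hasDerivAt_inv (ne_of_gt hy.1)).sub_const 1).hasDerivWithinAt
  have hinj : InjOn (fun y : ℝ => y⁻¹ - 1) (Ioo 0 1) := by
    intro y hy z hz hyz
    simp only [sub_left_inj] at hyz
    exact inv_injective hyz
  have h := integral_image_eq_integral_abs_deriv_smul measurableSet_Ioo hderiv hinj
    (fun x => x ^ a * (1 + x) ^ (a - 1))
  rw [himg] at h
  rw [h]
  have hcongr : ∀ y ∈ Ioo (0:ℝ) 1, |(-(y^2)⁻¹)| • ((y⁻¹ - 1) ^ a * (1 + (y⁻¹ - 1)) ^ (a - 1))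
      = y ^ (-2*a - 1) * (1 - y) ^ ((a + 1) - 1) := by
    intro y hy
    obtain ⟨hy0, hy1⟩ := hy
    have h1y : (0:ℝ) < 1 - y := by linarith
    have e1 : ((1 - y) * y⁻¹) ^ a = (1 - y) ^ a * y ^ (-a) := by
      rw [Real.mul_rpow h1y.le (inv_nonneg.mpr hy0.le), Real.inv_rpow hy0.le,
        ← Real.rpow_neg hy0.le]
    have e2 : (y⁻¹ : ℝ) ^ (a - 1) = y ^ (-(a - 1)) := by
      rw [Real.inv_rpow hy0.le, ← Real.rpow_neg hy0.le]
    have e3 : ((y:ℝ) ^ 2)⁻¹ = y ^ (-2 : ℝ) := by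
      rw [← Real.rpow_natCast y 2, ← Real.rpow_neg hy0.le]
      norm_num
    rw [abs_neg, abs_of_pos (by positivity), smul_eq_mul,
      show 1 + (y⁻¹ - 1) = y⁻¹ by ring,
      show y⁻¹ - 1 = (1 - y) * y⁻¹ by field_simp]
    calc (y ^ 2)⁻¹ * (((1 - y) * y⁻¹) ^ a * (y⁻¹) ^ (a - 1))
        = (1 - y) ^ a * (y ^ (-2:ℝ) * (y ^ (-a) * y ^ (-(a - 1)))) := by
          rw [e3, e1, e2]; ring
      _ = (1 - y) ^ a * y ^ (-2 + (-a + -(a - 1))) := by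
          rw [Real.rpow_add hy0, Real.rpow_add hy0]
      _ = y ^ (-2*a - 1) * (1 - y) ^ (a + 1 - 1) := by
          rw [show -2 + (-a + -(a - 1)) = -2*a - 1 by ring, show a + 1 - 1 = a by ring]
          ring
  rw [setIntegral_congr_fun measurableSet_Ioo hcongr, ← integral_Ioc_eq_integral_Ioo,
    ← intervalIntegral.integral_of_le zero_le_one, real_beta (by linarith) (by linarith),
    show -2*a + (a+1) = 1 - a by ring]
lemma integrableOn_K_type {a w : ℝ} (ha1 : -(1:ℝ) < a) (ha2 : a < 0) (hw : 0 < w) :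
    IntegrableOn (fun u : ℝ => u ^ a * (u + w) ^ (a - 1)) (Ioi 0) := by
  have hmeas : Measurable fun u : ℝ => u ^ a * (u + w) ^ (a - 1) := by fun_prop
  rw [← Ioc_union_Ioi_eq_Ioi (zero_le_one' ℝ)]
  apply IntegrableOn.union
  · apply Integrable.mono' (g := fun u => w ^ (a-1) * u ^ a)
      (((intervalIntegrable_iff_integrableOn_Ioc_of_le zero_le_one).mp
        (intervalIntegral.intervalIntegrable_rpow' ha1)).const_mul _)
      hmeas.aestronglyMeasurable.restrict
    rw [ae_restrict_iff' measurableSet_Ioc]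
    filter_upwards with u hu
    obtain ⟨hu0, hu1⟩ := hu
    rw [Real.norm_eq_abs, abs_mul, abs_of_nonneg (Real.rpow_nonneg hu0.le _),
      abs_of_nonneg (Real.rpow_nonneg (by linarith) _), mul_comm (w ^ (a-1))]
    exact mul_le_mul_of_nonneg_left
      (Real.rpow_le_rpow_of_nonpos hw (by linarith) (by linarith))
      (Real.rpow_nonneg hu0.le _)
  · apply Integrable.mono' (g := fun u : ℝ => u ^ (2*a - 1))
      (integrableOn_Ioi_rpow_of_lt (by linarith) one_pos)
      hmeas.aestronglyMeasurable.restrict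
    rw [ae_restrict_iff' measurableSet_Ioi]
    filter_upwards with u hu
    rw [mem_Ioi] at hu
    have hu0 : (0:ℝ) < u := by linarith
    rw [Real.norm_eq_abs, abs_mul, abs_of_nonneg (Real.rpow_nonneg hu0.le _),
      abs_of_nonneg (Real.rpow_nonneg (by linarith) _),
      show 2*a - 1 = a + (a - 1) by ring, Real.rpow_add hu0]
    exact mul_le_mul_of_nonneg_left
      (Real.rpow_le_rpow_of_nonpos hu0 (by linarith) (by linarith))
      (Real.rpow_nonneg hu0.le _)

lemma integrableOn_K_type' {a : ℝ} (ha1 : -(1:ℝ) < a) (ha2 : a < 0) :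
    IntegrableOn (fun x : ℝ => x ^ a * (1 + x) ^ (a - 1)) (Ioi 0) :=
  (integrableOn_K_type ha1 ha2 one_pos).congr_fun
    (fun x _ => by rw [add_comm]) measurableSet_Ioi

lemma inner_scale {a w : ℝ} (hw : 0 < w) :
    ∫ u in Ioi (0:ℝ), u ^ a * (u + w) ^ (a - 1)
      = w ^ (2*a) * ∫ x in Ioi (0:ℝ), x ^ a * (1 + x) ^ (a - 1) := by
  have h := integral_comp_mul_left_Ioi (fun u => u ^ a * (u + w) ^ (a - 1)) 0 hw
  rw [mul_zero] at h
  have hcongr : ∀ x ∈ Ioi (0:ℝ), (fun x => (w*x) ^ a * (w*x + w) ^ (a - 1)) x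
      = (fun x => w ^ (2*a - 1) * (x ^ a * (1 + x) ^ (a - 1))) x := by
    intro x hx; rw [mem_Ioi] at hx
    show (w*x) ^ a * (w*x + w) ^ (a - 1) = w ^ (2*a - 1) * (x ^ a * (1 + x) ^ (a - 1))
    rw [show w*x + w = w * (1 + x) by ring, Real.mul_rpow hw.le hx.le,
      Real.mul_rpow hw.le (by linarith), show 2*a - 1 = a + (a-1) by ring,
      Real.rpow_add hw]
    ring
  rw [show (fun x => (w * x) ^ a * (w * x + w) ^ (a - 1))
      = fun x : ℝ => (fun u : ℝ => u ^ a * (u + w) ^ (a - 1)) (w * x) from rfl] at hcongr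
  rw [setIntegral_congr_fun measurableSet_Ioi hcongr, integral_const_mul, smul_eq_mul] at h
  have h2 := congrArg (fun z => w * z) h
  rw [← mul_assoc w w⁻¹, mul_inv_cancel₀ hw.ne', one_mul] at h2
  rw [← h2]
  conv_rhs => rw [show (2*a : ℝ) = 1 + (2*a - 1) by ring]
  rw [Real.rpow_add hw, Real.rpow_one, mul_assoc]

lemma ftc_w {a u : ℝ} (hu : 0 < u) (ha : a ≠ 0) :
    (1 + u) ^ a - u ^ a = ∫ w in (0:ℝ)..1, a * (u + w) ^ (a - 1) := by
  have hder : ∀ w ∈ uIcc (0:ℝ) 1,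
      HasDerivAt (fun w : ℝ => (u + w) ^ a) (a * (u + w) ^ (a-1)) w := by
    intro w hw
    rw [uIcc_of_le zero_le_one] at hw
    have huw : u + w ≠ 0 := by nlinarith [hw.1]
    have h1 := Real.hasDerivAt_rpow_const (x := u + w) (p := a) (Or.inl huw)
    have h2 := HasDerivAt.comp w h1 ((hasDerivAt_id w).const_add u)
    simpa [Function.comp_def] using h2
  have hint : IntervalIntegrable (fun w : ℝ => a * (u + w) ^ (a - 1)) volume 0 1 := by
    apply ContinuousOn.intervalIntegrable
    intro w hw
    rw [uIcc_of_le zero_le_one] at hw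
    have huw : u + w ≠ 0 := by nlinarith [hw.1]
    exact (continuousAt_const.mul ((Real.continuousAt_rpow_const _ _ (Or.inl huw)).comp
      (continuousAt_const.add continuousAt_id))).continuousWithinAt
  rw [intervalIntegral.integral_eq_sub_of_hasDerivAt hder hint, add_zero, add_comm u 1]

lemma J_eval {a : ℝ} (ha1 : -(1/2:ℝ) < a) (ha2 : a < 0) :
    (∫ u in Ioi (0:ℝ), u ^ a * ((1 + u) ^ a - u ^ a)
      = a * (∫ x in Ioi (0:ℝ), x ^ a * (1 + x) ^ (a - 1)) / (2*a + 1))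
    ∧ IntegrableOn (fun u : ℝ => u ^ a * ((1 + u) ^ a - u ^ a)) (Ioi 0) := by
  have h2a1 : (-1:ℝ) < 2*a := by linarith
  have h2a0 : (2*a : ℝ) ≠ 0 := by linarith
  have h2ap : (0:ℝ) < 2*a + 1 := by linarith
  set K := ∫ x in Ioi (0:ℝ), x ^ a * (1 + x) ^ (a - 1) with hK
  set μ := volume.restrict (Ioc (0:ℝ) 1) with hμ
  set ν := volume.restrict (Ioi (0:ℝ)) with hν
  set G : ℝ × ℝ → ℝ := fun p => p.2 ^ a * (a * (p.2 + p.1) ^ (a - 1)) with hG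
  have hGmeas : Measurable G := by rw [hG]; fun_prop
  -- inner u-integral for fixed w > 0
  have hinner : ∀ w : ℝ, 0 < w → (∫ u, G (w, u) ∂ν) = a * (w ^ (2*a) * K) := by
    intro w hw
    have hc : ∀ u ∈ Ioi (0:ℝ), G (w, u) = a * (u ^ a * (u + w) ^ (a - 1)) := by
      intro u _
      rw [hG]; ring
    rw [hν, setIntegral_congr_fun measurableSet_Ioi hc, integral_const_mul,
      inner_scale hw]
  have hGint : Integrable G (μ.prod ν) := by
    rw [integrable_prod_iff hGmeas.aestronglyMeasurable]
    constructor
    · rw [hμ, ae_restrict_iff' measurableSet_Ioc]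
      filter_upwards with w hw
      exact ((integrableOn_K_type (by linarith) ha2 hw.1).const_mul a).congr
        (ae_of_all _ fun u => by rw [hG]; ring)
    · have hdom : Integrable (fun w : ℝ => pp (2*a) w * ((-a) * |K|)) μ := by
        rw [hμ]
        exact ((intervalIntegrable_iff_integrableOn_Ioc_of_le zero_le_one).mp
          (intervalIntegrable_pp h2a1 h2a0 0 1)).mul_const _
      apply Integrable.mono' hdom hGmeas.norm.aestronglyMeasurable.integral_prod_right'
      · rw [hμ, ae_restrict_iff' measurableSet_Ioc]
        filter_upwards with w hw
        have hw0 := hw.1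
        have hnorm : ∀ u ∈ Ioi (0:ℝ), ‖G (w, u)‖ = (-a) * (u ^ a * (u + w) ^ (a - 1)) := by
          intro u hu
          rw [mem_Ioi] at hu
          rw [hG, Real.norm_eq_abs, abs_mul, abs_mul,
            abs_of_nonneg (Real.rpow_nonneg hu.le _),
            abs_of_nonneg (Real.rpow_nonneg (by linarith) _), abs_of_neg ha2]
          ring
        rw [hν, setIntegral_congr_fun measurableSet_Ioi hnorm, integral_const_mul,
          inner_scale hw0, Real.norm_eq_abs, abs_mul, abs_mul,
          abs_of_pos (neg_pos.mpr ha2), abs_of_nonneg (Real.rpow_nonneg hw0.le _),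
          pp_of_pos hw0]
        exact le_of_eq (by ring)
  have hswap := integral_integral_swap (f := fun w u => G (w, u)) hGint
  -- identify the u-integral of G with the target integrand
  have hEcongr : ∀ u ∈ Ioi (0:ℝ), (∫ w, G (w, u) ∂μ) = u ^ a * ((1 + u) ^ a - u ^ a) := by
    intro u hu
    rw [mem_Ioi] at hu
    have hc : ∀ w ∈ Ioc (0:ℝ) 1, G (w, u) = u ^ a * (a * (u + w) ^ (a - 1)) := by
      intro w _; rw [hG]
    rw [hμ, setIntegral_congr_fun measurableSet_Ioc hc, integral_const_mul,
      ← intervalIntegral.integral_of_le zero_le_one, ← ftc_w hu ha2.ne]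
  have hint : IntegrableOn (fun u : ℝ => u ^ a * ((1 + u) ^ a - u ^ a)) (Ioi 0) := by
    apply (hGint.integral_prod_right).congr
    have : ∀ᵐ u ∂ν, (∫ w, G (w, u) ∂μ) = u ^ a * ((1 + u) ^ a - u ^ a) := by
      rw [hν, ae_restrict_iff' measurableSet_Ioi]
      exact ae_of_all _ hEcongr
    exact this
  refine ⟨?_, hint⟩
  have hL : ∫ u in Ioi (0:ℝ), u ^ a * ((1 + u) ^ a - u ^ a)
      = ∫ u, (∫ w, G (w, u) ∂μ) ∂ν := by
    rw [hν]
    exact (setIntegral_congr_fun measurableSet_Ioi hEcongr).symm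
  rw [hL, ← hswap]
  have houter : ∀ w ∈ Ioc (0:ℝ) 1, (∫ u, G (w, u) ∂ν) = (a * K) * w ^ (2*a) := by
    intro w hw
    rw [hinner w hw.1]; ring
  rw [hμ, setIntegral_congr_fun measurableSet_Ioc houter, integral_const_mul,
    ← intervalIntegral.integral_of_le zero_le_one, integral_rpow (Or.inl h2a1),
    Real.one_rpow, Real.zero_rpow (by linarith : 2*a+1 ≠ 0)]
  ring
lemma rpow_mul_self_eq {x p : ℝ} (hx : 0 ≤ x) (hp : p ≠ 0) : x ^ p * x ^ p = x ^ (2*p) := by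
  rcases eq_or_lt_of_le hx with h | h
  · rw [← h, Real.zero_rpow hp, Real.zero_rpow (by simpa using hp), mul_zero]
  · rw [← Real.rpow_add h]; congr 1; ring

lemma integrableOn_D {a : ℝ} (ha1 : -(1/2:ℝ) < a) (ha2 : a < 0) :
    IntegrableOn (fun u : ℝ => (1 + u) ^ (2*a) - u ^ (2*a)) (Ioi 0) := by
  have hmeas : Measurable fun u : ℝ => (1 + u) ^ (2*a) - u ^ (2*a) := by fun_prop
  rw [← Ioc_union_Ioi_eq_Ioi (zero_le_one' ℝ)]
  apply IntegrableOn.union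
  · apply Integrable.mono' (g := fun u : ℝ => 1 + u ^ (2*a))
      ((integrableOn_const measure_Ioc_lt_top.ne).add
        ((intervalIntegrable_iff_integrableOn_Ioc_of_le zero_le_one).mp
          (intervalIntegral.intervalIntegrable_rpow' (by linarith))))
      hmeas.aestronglyMeasurable.restrict
    rw [ae_restrict_iff' measurableSet_Ioc]
    filter_upwards with u hu
    have hu0 := hu.1
    have h1 : (1 + u) ^ (2*a) ≤ 1 :=
      Real.rpow_le_one_of_one_le_of_nonpos (by linarith) (by linarith)
    have h2 : (0:ℝ) ≤ (1+u) ^ (2*a) := Real.rpow_nonneg (by linarith) _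
    have h3 : (0:ℝ) ≤ u ^ (2*a) := Real.rpow_nonneg hu0.le _
    rw [Real.norm_eq_abs, abs_le]
    constructor <;> nlinarith
  · apply Integrable.mono' (g := fun u : ℝ => -(2*a) * u ^ (2*a - 1))
      ((integrableOn_Ioi_rpow_of_lt (by linarith) one_pos).const_mul _)
      hmeas.aestronglyMeasurable.restrict
    rw [ae_restrict_iff' measurableSet_Ioi]
    filter_upwards with u hu
    rw [mem_Ioi] at hu
    have hb := rpow_add_sub_rpow_le (p := 2*a) (by linarith) (lt_trans zero_lt_one hu) zero_le_one
    rw [Real.norm_eq_abs, abs_of_neg (by linarith : 2*a < 0)] at *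
    calc |(1 + u) ^ (2*a) - u ^ (2*a)| ≤ -(2*a) * 1 * u ^ (2*a-1) := hb
      _ = -(2*a) * u ^ (2*a-1) := by ring

lemma D_eval {a : ℝ} (ha1 : -(1/2:ℝ) < a) (ha2 : a < 0) :
    ∫ u in Ioi (0:ℝ), ((1 + u) ^ (2*a) - u ^ (2*a)) = -(1/(2*a+1)) := by
  set c := 2*a+1 with hc
  have hc0 : 0 < c := by rw [hc]; linarith
  have hc1 : c < 1 := by rw [hc]; linarith
  have hca : c - 1 = 2*a := by rw [hc]; ring
  have hφderiv : ∀ u ∈ Ioi (0:ℝ), HasDerivAt (fun u : ℝ => ((1+u)^c - u^c)/c)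
      ((1+u)^(2*a) - u^(2*a)) u := by
    intro u hu
    rw [mem_Ioi] at hu
    have h1 : HasDerivAt (fun u : ℝ => (1+u)^c) (c * (1+u)^(c-1)) u := by
      have := Real.hasDerivAt_rpow_const (x := 1+u) (p := c) (Or.inl (by linarith))
      simpa [Function.comp_def] using HasDerivAt.comp u this ((hasDerivAt_id u).const_add 1)
    have h2 : HasDerivAt (fun u : ℝ => u^c) (c * u^(c-1)) u :=
      Real.hasDerivAt_rpow_const (Or.inl hu.ne')
    have h3 := (h1.sub h2).div_const c
    have he : (c * (1+u)^(c-1) - c * u^(c-1))/c = (1+u)^(2*a) - u^(2*a) := by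
      rw [hca]
      field_simp
    rwa [he] at h3
  have hcont : ContinuousWithinAt (fun u : ℝ => ((1+u)^c - u^c)/c) (Ici 0) 0 := by
    apply ContinuousWithinAt.div_const
    apply ContinuousWithinAt.sub
    · exact ((Real.continuousAt_rpow_const (1+0) c (Or.inl (by norm_num))).comp
        (continuousAt_const.add continuousAt_id)).continuousWithinAt
    · exact (Real.continuousAt_rpow_const 0 c (Or.inr hc0.le)).continuousWithinAt
  have htends : Tendsto (fun u : ℝ => ((1+u)^c - u^c)/c) atTop (nhds 0) := by
    apply squeeze_zero' (g := fun u : ℝ => u ^ (c-1))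
    · filter_upwards [eventually_gt_atTop (0:ℝ)] with u hu
      have : u ^ c ≤ (1+u) ^ c := Real.rpow_le_rpow hu.le (by linarith) hc0.le
      exact div_nonneg (by linarith) hc0.le
    · filter_upwards [eventually_gt_atTop (0:ℝ)] with u hu
      have hb := rpow_add_sub_rpow_le (p := c) hc1.le hu zero_le_one
      rw [abs_of_pos hc0, mul_one] at hb
      rw [div_le_iff₀ hc0]
      calc (1+u)^c - u^c ≤ |(1+u)^c - u^c| := le_abs_self _
        _ ≤ c * u ^ (c-1) := hb
        _ = u ^ (c-1) * c := by ring
    · have := tendsto_rpow_neg_atTop (y := 1 - c) (by linarith)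
      simpa [show -(1-c) = c - 1 by ring] using this
  have hres := integral_Ioi_of_hasDerivAt_of_tendsto hcont hφderiv (integrableOn_D ha1 ha2) htends
  rw [hres]
  rw [show (1:ℝ) + 0 = 1 by ring, Real.one_rpow, Real.zero_rpow hc0.ne']
  rw [hc]
  norm_num

/-- The constant: `∫ mvn(a,1)² = (-2a)·K/(2a+1)`. -/
lemma C_eval {a : ℝ} (ha1 : -(1/2:ℝ) < a) (ha2 : a < 0) :
    ∫ r, mvn a 1 r ^ 2
      = (-2*a) * (∫ x in Ioi (0:ℝ), x ^ a * (1 + x) ^ (a - 1)) / (2*a + 1) := by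
  have h2a1 : (-1:ℝ) < 2*a := by linarith
  have hsq : ∀ r, mvn a 1 r ^ 2 = mvn a 1 r * mvn a 1 r := fun r => sq (mvn a 1 r)
  simp_rw [hsq]
  rw [integral_mvn_mul_eq ha1 ha2 zero_le_one le_rfl, min_self]
  have hA : (∫ r in (0:ℝ)..1, (1 - r) ^ a * (1 - r) ^ a) = 1/(2*a+1) := by
    have h1 : (∫ r in (0:ℝ)..1, (1 - r) ^ a * (1 - r) ^ a)
        = ∫ r in (0:ℝ)..1, (1 - r) ^ (2*a) := by
      apply intervalIntegral.integral_congr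
      intro r hr
      rw [uIcc_of_le zero_le_one] at hr
      exact rpow_mul_self_eq (by linarith [hr.2]) ha2.ne
    rw [h1, intervalIntegral.integral_comp_sub_left (fun x => x ^ (2*a)) 1,
      show (1:ℝ) - 1 = 0 by norm_num, show (1:ℝ) - 0 = 1 by norm_num,
      integral_rpow (Or.inl h2a1), Real.one_rpow, Real.zero_rpow (by linarith : 2*a+1 ≠ 0)]
    norm_num
  have hB : (∫ r in Ioi (0:ℝ), ((1 + r) ^ a - r ^ a) * ((1 + r) ^ a - r ^ a))
      = -(1/(2*a+1)) - 2 * (a * (∫ x in Ioi (0:ℝ), x ^ a * (1 + x) ^ (a - 1)) / (2*a + 1)) := by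
    obtain ⟨hJval, hJint⟩ := J_eval ha1 ha2
    have hc : ∀ r ∈ Ioi (0:ℝ), ((1 + r) ^ a - r ^ a) * ((1 + r) ^ a - r ^ a)
        = ((1 + r) ^ (2*a) - r ^ (2*a)) - 2 * (r ^ a * ((1 + r) ^ a - r ^ a)) := by
      intro r hr
      rw [mem_Ioi] at hr
      have e1 : (1+r)^a * (1+r)^a = (1+r)^(2*a) := rpow_mul_self_eq (by linarith) ha2.ne
      have e2 : r^a * r^a = r^(2*a) := rpow_mul_self_eq hr.le ha2.ne
      rw [show ((1 + r) ^ a - r ^ a) * ((1 + r) ^ a - r ^ a)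
          = (1+r)^a * (1+r)^a - r^a * r^a - 2 * (r ^ a * ((1 + r) ^ a - r ^ a)) by ring,
        e1, e2]
    rw [setIntegral_congr_fun measurableSet_Ioi hc,
      integral_sub (integrableOn_D ha1 ha2) (hJint.const_mul 2),
      integral_const_mul, D_eval ha1 ha2, hJval]
  rw [hA, hB]
  ring
lemma C_gamma {H : ℝ} (h0 : 0 < H) (h2 : H < 1/2) :
    ∫ r, mvn (H - 1/2) 1 r ^ 2
      = Real.Gamma (H + 1/2) ^ 2 / (Real.Gamma (2*H + 1) * Real.sin (Real.pi * H)) := by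
  have ha1 : -(1/2:ℝ) < H - 1/2 := by linarith
  have ha2 : H - 1/2 < 0 := by linarith
  rw [C_eval ha1 ha2, K_eval ha1 ha2,
    show -2*(H - 1/2) = 1 - 2*H by ring, show (H - 1/2) + 1 = H + 1/2 by ring,
    show 1 - (H - 1/2) = 1/2 - H + 1 by ring, show 2*(H - 1/2) + 1 = 2*H by ring]
  have hπ := Real.pi_pos
  have hS : 0 < Real.sin (Real.pi * H) :=
    Real.sin_pos_of_pos_of_lt_pi (by positivity) (by nlinarith)
  have hCs : 0 < Real.cos (Real.pi * H) :=
    Real.cos_pos_of_mem_Ioo ⟨by nlinarith, by nlinarith⟩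
  have hG1 : 0 < Real.Gamma (2*H) := Real.Gamma_pos_of_pos (by linarith)
  have hG2 : 0 < Real.Gamma (H + 1/2) := Real.Gamma_pos_of_pos (by linarith)
  have hr1 : Real.Gamma (2*H) * Real.Gamma (1 - 2*H)
      * (2 * Real.sin (Real.pi * H) * Real.cos (Real.pi * H)) = Real.pi := by
    have h := Real.Gamma_mul_Gamma_one_sub (2*H)
    rw [show Real.pi * (2*H) = 2*(Real.pi*H) by ring, Real.sin_two_mul] at h
    rw [h]
    field_simp
  have hr2 : Real.Gamma (H + 1/2) * Real.Gamma (1/2 - H) * Real.cos (Real.pi * H)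
      = Real.pi := by
    have h := Real.Gamma_mul_Gamma_one_sub (H + 1/2)
    rw [show 1 - (H + 1/2) = 1/2 - H by ring,
      show Real.pi * (H + 1/2) = Real.pi*H + Real.pi/2 by ring,
      Real.sin_add_pi_div_two] at h
    rw [h]
    field_simp
  have e4 : Real.Gamma (1 - 2*H)
      = Real.pi / (Real.Gamma (2*H) * (2 * Real.sin (Real.pi * H) * Real.cos (Real.pi * H))) := by
    rw [eq_div_iff (by positivity)]
    linarith [hr1]
  have e3 : Real.Gamma (1/2 - H)
      = Real.pi / (Real.Gamma (H + 1/2) * Real.cos (Real.pi * H)) := by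
    rw [eq_div_iff (by positivity)]
    linarith [hr2]
  rw [Real.Gamma_add_one (by linarith : (1/2:ℝ) - H ≠ 0),
    Real.Gamma_add_one (by linarith : 2*H ≠ 0), e4, e3]
  set S := Real.sin (Real.pi * H) with hSdef
  set Cs := Real.cos (Real.pi * H) with hCdef
  set G1 := Real.Gamma (2*H) with hG1def
  set G2 := Real.Gamma (H + 1/2) with hG2def
  have hH2 : (1/2:ℝ) - H ≠ 0 := by linarith
  field_simp
  have hX : H * Real.pi * Cs * G1 * S * 4 - H ^ 2 * Real.pi * Cs * G1 * S * 8 ≠ 0 := by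
    have he : H * Real.pi * Cs * G1 * S * 4 - H ^ 2 * Real.pi * Cs * G1 * S * 8
        = 4 * (H * Real.pi * Cs * G1 * S) * (1 - 2*H) := by ring
    rw [he]
    have hp : 0 < 4 * (H * Real.pi * Cs * G1 * S) * (1 - 2*H) :=
      mul_pos (mul_pos (by norm_num)
        (mul_pos (mul_pos (mul_pos (mul_pos h0 hπ) hCs) hG1) hS)) (by linarith)
    exact hp.ne'
  exact div_self (by linarith)

lemma integral_mvn_sq_eq {a : ℝ} (ha1 : -(1/2:ℝ) < a) (ha2 : a < 0) {t : ℝ} (ht : 0 ≤ t) :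
    ∫ r, mvn a t r ^ 2 = t ^ (2*a+1) * ∫ r, mvn a 1 r ^ 2 := by
  rcases eq_or_lt_of_le ht with h | h
  · rw [← h, Real.zero_rpow (by linarith : 2*a+1 ≠ 0), zero_mul]
    have : ∀ r : ℝ, mvn a 0 r = 0 := by
      intro r
      rw [mvn, zero_sub, sub_self]
    simp [this]
  · exact integral_mvn_sq_scale h

lemma core {H s t : ℝ} (h0 : 0 < H) (h2 : H < 1/2) (hs : 0 ≤ s) (hst : s ≤ t) :
    ((∫ r in (0:ℝ)..(min s t), (t - r) ^ (H - 1/2) * (s - r) ^ (H - 1/2))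
      + ∫ r in Ioi (0:ℝ),
          ((t + r) ^ (H - 1/2) - r ^ (H - 1/2)) * ((s + r) ^ (H - 1/2) - r ^ (H - 1/2)))
    = (Real.Gamma (H + 1/2) ^ 2 / (Real.Gamma (2*H + 1) * Real.sin (Real.pi * H)))
        * ((1/2) * (t ^ (2*H) + s ^ (2*H) - (t - s) ^ (2*H))) := by
  have ha1 : -(1/2:ℝ) < H - 1/2 := by linarith
  have ha2 : H - 1/2 < 0 := by linarith
  have ht : 0 ≤ t := le_trans hs hst
  rw [← integral_mvn_mul_eq ha1 ha2 hs hst]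
  have hsq_t := integrable_mvn_sq ha1 ha2 ht
  have hsq_s := integrable_mvn_sq ha1 ha2 hs
  have hmul := integrable_mvn_mul ha1 ha2 ht hs
  have hpol : ∫ r, mvn (H - 1/2) t r * mvn (H - 1/2) s r
      = (1/2) * ((∫ r, mvn (H - 1/2) t r ^ 2) + (∫ r, mvn (H - 1/2) s r ^ 2)
          - ∫ r, (mvn (H - 1/2) t r - mvn (H - 1/2) s r) ^ 2) := by
    have hexp : ∀ r, (mvn (H - 1/2) t r - mvn (H - 1/2) s r) ^ 2
        = mvn (H - 1/2) t r ^ 2 + mvn (H - 1/2) s r ^ 2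
          - 2 * (mvn (H - 1/2) t r * mvn (H - 1/2) s r) := fun r => by ring
    simp_rw [hexp]
    have hadd : Integrable (fun r => mvn (H - 1/2) t r ^ 2 + mvn (H - 1/2) s r ^ 2) volume :=
      hsq_t.add hsq_s
    rw [integral_sub hadd (hmul.const_mul 2), integral_add hsq_t hsq_s, integral_const_mul]
    ring
  rw [hpol, integral_mvn_sub_sq, integral_mvn_sq_eq ha1 ha2 ht, integral_mvn_sq_eq ha1 ha2 hs,
    integral_mvn_sq_eq ha1 ha2 (by linarith : (0:ℝ) ≤ t - s), C_gamma h0 h2,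
    show 2*(H - 1/2) + 1 = 2*H by ring]
  ring

/-- Mandelbrot–van Ness covariance identity, deterministic form: with
`c_H = (Γ(2H+1) sin(πH))^{-1/2} Γ(H+1/2)`, for all `s,t ≥ 0`,
`c_H^{-2} [∫_0^{s∧t} (t-r)^{H-1/2}(s-r)^{H-1/2} dr
  + ∫_0^∞ ((t+r)^{H-1/2} - r^{H-1/2})((s+r)^{H-1/2} - r^{H-1/2}) dr]
  = (1/2)(t^{2H} + s^{2H} - |t-s|^{2H})`,
which by the Itô isometry is `E[B^H_t B^H_s]` in the Mandelbrot–van Ness representation. -/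
theorem statement15 (H : ℝ) (hH : H ∈ Set.Ioo (0:ℝ) (1/2)) (s t : ℝ)
    (hs : 0 ≤ s) (ht : 0 ≤ t) :
    (((Real.Gamma (2*H + 1) * Real.sin (Real.pi * H)) ^ (-(1/2) : ℝ)
        * Real.Gamma (H + 1/2))⁻¹) ^ 2 *
      ((∫ r in (0:ℝ)..(min s t), (t - r) ^ (H - 1/2) * (s - r) ^ (H - 1/2))
        + ∫ r in Set.Ioi (0:ℝ),
            ((t + r) ^ (H - 1/2) - r ^ (H - 1/2)) * ((s + r) ^ (H - 1/2) - r ^ (H - 1/2)))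
    = (1/2) * (t ^ (2*H) + s ^ (2*H) - |t - s| ^ (2*H)) := by
  obtain ⟨h0, h2⟩ := hH
  have hπ := Real.pi_pos
  have hS : 0 < Real.sin (Real.pi * H) :=
    Real.sin_pos_of_pos_of_lt_pi (by positivity) (by nlinarith)
  have hG1 : 0 < Real.Gamma (2*H + 1) := Real.Gamma_pos_of_pos (by linarith)
  have hG2 : 0 < Real.Gamma (H + 1/2) := Real.Gamma_pos_of_pos (by linarith)
  have hx : 0 < Real.Gamma (2*H + 1) * Real.sin (Real.pi * H) := by positivity
  have hpre : (((Real.Gamma (2*H + 1) * Real.sin (Real.pi * H)) ^ (-(1/2) : ℝ)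
        * Real.Gamma (H + 1/2))⁻¹) ^ 2
      = (Real.Gamma (H + 1/2) ^ 2 / (Real.Gamma (2*H + 1) * Real.sin (Real.pi * H)))⁻¹ := by
    have hinv : ((Real.Gamma (2*H + 1) * Real.sin (Real.pi * H)) ^ (-(1/2) : ℝ))⁻¹
        = (Real.Gamma (2*H + 1) * Real.sin (Real.pi * H)) ^ ((1/2) : ℝ) := by
      rw [← Real.rpow_neg hx.le]
      norm_num
    have hsq : ((Real.Gamma (2*H + 1) * Real.sin (Real.pi * H)) ^ ((1/2) : ℝ)) ^ 2
        = Real.Gamma (2*H + 1) * Real.sin (Real.pi * H) := by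
      rw [← Real.rpow_natCast _ 2, ← Real.rpow_mul hx.le]
      norm_num
    rw [mul_inv, mul_pow, hinv, hsq, inv_pow]
    field_simp
  rw [hpre]
  rcases le_total s t with h | h
  · rw [core h0 h2 hs h, abs_of_nonneg (sub_nonneg.mpr h), ← mul_assoc,
      inv_mul_cancel₀ (by positivity), one_mul]
  · have hsymm1 : (∫ r in (0:ℝ)..(min s t), (t - r) ^ (H - 1/2) * (s - r) ^ (H - 1/2))
        = ∫ r in (0:ℝ)..(min t s), (s - r) ^ (H - 1/2) * (t - r) ^ (H - 1/2) := by
      rw [min_comm]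
      apply intervalIntegral.integral_congr
      intro x _
      ring
    have hsymm2 : (∫ r in Set.Ioi (0:ℝ),
          ((t + r) ^ (H - 1/2) - r ^ (H - 1/2)) * ((s + r) ^ (H - 1/2) - r ^ (H - 1/2)))
        = ∫ r in Set.Ioi (0:ℝ),
          ((s + r) ^ (H - 1/2) - r ^ (H - 1/2)) * ((t + r) ^ (H - 1/2) - r ^ (H - 1/2)) := by
      apply setIntegral_congr_fun measurableSet_Ioi
      intro x _
      ring
    rw [hsymm1, hsymm2, core h0 h2 ht h, abs_sub_comm, abs_of_nonneg (sub_nonneg.mpr h),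
      ← mul_assoc, inv_mul_cancel₀ (by positivity), one_mul]
    ring
end

section
/- Let H ∈ (0,1/2), β > 0, and let φ̂_n be such that φ̂_n(t) = (t+n^{-β})^{H-1/2} for t ≥ n^{-β} and φ̂_n ≤ C φ∞ uniformly, with φ∞(t) = t^{H-1/2}. Then for all t > s > n^{-β}: | ∫_1^∞ [ (φ̂_n(t+r) − φ̂_n(r))(φ̂_n(s+r) − φ̂_n(r)) − (φ∞(t+r) − φ∞(r))(φ∞(s+r) − φ∞(r)) ] dr | ≤ C' n^{-β} for a constant C' independent of n, s, t ∈ (n^{-β}, T]. -/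
open MeasureTheory Set Filter

/-- MVT bound: for `p < 0`, `0 < x ≤ y`, `x^p - y^p ≤ (-p) * (y-x) * x^(p-1)`. -/
lemma mvt_rpow (p : ℝ) (hp : p < 0) {x y : ℝ} (hx : 0 < x) (hxy : x ≤ y) :
    x ^ p - y ^ p ≤ (-p) * (y - x) * x ^ (p - 1) := by
  rcases eq_or_lt_of_le hxy with h | h
  · simp [h]
  · have hcont : ContinuousOn (fun u : ℝ => u ^ p) (Set.Icc x y) := by
      intro u hu
      exact (Real.hasDerivAt_rpow_const (Or.inl (hx.trans_le hu.1).ne')).continuousAt.continuousWithinAt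
    have hderiv : ∀ u ∈ Set.Ioo x y, HasDerivAt (fun u : ℝ => u ^ p) (p * u ^ (p - 1)) u := by
      intro u hu
      exact Real.hasDerivAt_rpow_const (Or.inl (hx.trans hu.1).ne')
    obtain ⟨c, hc, hslope⟩ := exists_hasDerivAt_eq_slope (fun u : ℝ => u ^ p)
      (fun u => p * u ^ (p - 1)) h hcont hderiv
    have hyx : 0 < y - x := sub_pos.2 h
    have : y ^ p - x ^ p = p * c ^ (p - 1) * (y - x) := by
      field_simp at hslope
      linarith [hslope]
    have hcx : c ^ (p - 1) ≤ x ^ (p - 1) :=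
      Real.rpow_le_rpow_of_nonpos hx hc.1.le (by linarith)
    have hcpos : (0:ℝ) ≤ c ^ (p - 1) := Real.rpow_nonneg (hx.trans hc.1).le _
    have h5 : (-p * (y - x)) * c ^ (p - 1) ≤ (-p * (y - x)) * x ^ (p - 1) :=
      mul_le_mul_of_nonneg_left hcx (by nlinarith [neg_pos.2 hp])
    nlinarith [h5]

/-- `0 ≤ x^p - y^p` for `p ≤ 0`, `0 < x ≤ y`. -/
lemma rpow_anti (p : ℝ) (hp : p ≤ 0) {x y : ℝ} (hx : 0 < x) (hxy : x ≤ y) :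
    y ^ p ≤ x ^ p := Real.rpow_le_rpow_of_nonpos hx hxy hp

/-- part of Lemma A.4: with `φ̂_n(u) = (u+n^{-β})^{H-1/2}` for
`u ≥ n^{-β}` and `φ̂_n ≤ C φ∞` uniformly (`φ∞(u) = u^{H-1/2}`), for all
`t > s > n^{-β}` with `t ≤ T`:
`|∫_1^∞ [(φ̂_n(t+r)-φ̂_n(r))(φ̂_n(s+r)-φ̂_n(r))
        - (φ∞(t+r)-φ∞(r))(φ∞(s+r)-φ∞(r))] dr| ≤ C' n^{-β}`,
with `C'` independent of `n, s, t ∈ (n^{-β}, T]`. -/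
theorem statement18 (H β T C : ℝ) (hH : H ∈ Set.Ioo (0:ℝ) (1/2)) (hβ : 0 < β)
    (hT : 0 < T) (hC : 0 < C)
    (φ : ℕ → ℝ → ℝ)
    (heq : ∀ n : ℕ, 1 ≤ n → ∀ u : ℝ, (n:ℝ) ^ (-β) ≤ u →
      φ n u = (u + (n:ℝ) ^ (-β)) ^ (H - 1/2))
    (hbd : ∀ n : ℕ, 1 ≤ n → ∀ u : ℝ, 0 < u → |φ n u| ≤ C * u ^ (H - 1/2)) :
    ∃ C' : ℝ, 0 < C' ∧ ∀ n : ℕ, 1 ≤ n → ∀ s t : ℝ,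
      (n:ℝ) ^ (-β) < s → s < t → t ≤ T →
      |∫ r in Set.Ioi (1:ℝ),
          ((φ n (t + r) - φ n r) * (φ n (s + r) - φ n r)
            - ((t + r) ^ (H - 1/2) - r ^ (H - 1/2))
              * ((s + r) ^ (H - 1/2) - r ^ (H - 1/2)))|
        ≤ C' * (n:ℝ) ^ (-β) := by
  obtain ⟨p, hpdef⟩ : ∃ p : ℝ, p = H - 1/2 := ⟨_, rfl⟩
  simp only [← hpdef] at heq ⊢
  have hp0 : p < 0 := by simp [hpdef]; linarith [hH.2]
  have hpg : -(1:ℝ)/2 < p := by simp [hpdef]; linarith [hH.1]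
  have h1H : (0:ℝ) < 1 - H := by linarith [hH.2]
  refine ⟨T / (1 - H) + 1, by have := div_pos hT h1H; linarith, ?_⟩
  intro n hn s t hs hst htT
  obtain ⟨ε, hεdef⟩ : ∃ e : ℝ, e = (n:ℝ) ^ (-β) := ⟨_, rfl⟩
  simp only [← hεdef] at hs ⊢
  have hn1 : (1:ℝ) ≤ (n:ℝ) := by exact_mod_cast hn
  have hε0 : 0 < ε := hεdef ▸ Real.rpow_pos_of_pos (by linarith) _
  have hε1 : ε ≤ 1 := hεdef ▸ Real.rpow_le_one_of_one_le_of_nonpos hn1 (by linarith)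
  have hs0 : 0 < s := hε0.trans hs
  have ht0 : 0 < t := hs0.trans hst
  -- rewrite the integrand on Ioi 1
  have hre : ∀ r ∈ Set.Ioi (1:ℝ),
      ((φ n (t + r) - φ n r) * (φ n (s + r) - φ n r)
        - ((t + r) ^ p - r ^ p) * ((s + r) ^ p - r ^ p))
      = (((t + r + ε) ^ p - (r + ε) ^ p) * ((s + r + ε) ^ p - (r + ε) ^ p)
          - ((t + r) ^ p - r ^ p) * ((s + r) ^ p - r ^ p)) := by
    intro r hr
    have hr1 : 1 < r := hr
    have h1 : ε ≤ r := hε1.trans hr1.le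
    rw [hεdef] at h1 ⊢
    rw [heq n hn r h1, heq n hn (t + r) (by linarith), heq n hn (s + r) (by linarith)]
  -- pointwise bound
  have key : ∀ r ∈ Set.Ioi (1:ℝ),
      |((t + r + ε) ^ p - (r + ε) ^ p) * ((s + r + ε) ^ p - (r + ε) ^ p)
        - ((t + r) ^ p - r ^ p) * ((s + r) ^ p - r ^ p)|
      ≤ 2 * T * ε * r ^ (2 * p - 2) := by
    intro r hr
    have hr1 : (1:ℝ) < r := hr
    have hr0 : (0:ℝ) < r := by linarith
    -- generic estimates
    have step : ∀ x δ : ℝ, 0 < x → 0 ≤ δ → r ≤ x →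
        |(x + δ) ^ p - x ^ p| ≤ (1/2) * δ * r ^ (p - 1) := by
      intro x δ hx hδ hrx
      have h1 : x ^ p - (x + δ) ^ p ≤ (-p) * δ * x ^ (p - 1) := by
        have := mvt_rpow p hp0 hx (by linarith : x ≤ x + δ)
        simpa using this
      have h2 : (x + δ) ^ p ≤ x ^ p := rpow_anti p hp0.le hx (by linarith)
      have h3 : x ^ (p - 1) ≤ r ^ (p - 1) := rpow_anti (p-1) (by linarith) hr0 hrx
      have h4 : (0:ℝ) ≤ x ^ (p - 1) := Real.rpow_nonneg hx.le _
      rw [abs_sub_comm, abs_of_nonneg (by linarith)]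
      have h5 : (-p) * (δ * x ^ (p - 1)) ≤ (1/2) * (δ * r ^ (p - 1)) := by
        apply mul_le_mul (by linarith [hpg]) (mul_le_mul_of_nonneg_left h3 hδ)
          (by positivity) (by norm_num)
      have h6 : -p * δ * x ^ (p - 1) = -p * (δ * x ^ (p - 1)) := by ring
      have h7 : (1/2 : ℝ) * (δ * r ^ (p - 1)) = 1 / 2 * δ * r ^ (p - 1) := by ring
      linarith [h1, h5, h6, h7]
    have hrp1 : (0:ℝ) ≤ r ^ (p - 1) := Real.rpow_nonneg hr0.le _
    -- |Aε - A0| ≤ ε r^(p-1)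
    have hdiff : ∀ a : ℝ, 0 < a →
        |((a + r + ε) ^ p - (r + ε) ^ p) - ((a + r) ^ p - r ^ p)| ≤ ε * r ^ (p - 1) := by
      intro a ha
      have e1 : |(a + r + ε) ^ p - (a + r) ^ p| ≤ (1/2) * ε * r ^ (p - 1) := by
        have := step (a + r) ε (by linarith) hε0.le (by linarith)
        convert this using 3 <;> ring
      have e2 : |(r + ε) ^ p - r ^ p| ≤ (1/2) * ε * r ^ (p - 1) :=
        step r ε hr0 hε0.le le_rfl
      calc |((a + r + ε) ^ p - (r + ε) ^ p) - ((a + r) ^ p - r ^ p)|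
          = |((a + r + ε) ^ p - (a + r) ^ p) - ((r + ε) ^ p - r ^ p)| := by ring_nf
        _ ≤ |(a + r + ε) ^ p - (a + r) ^ p| + |(r + ε) ^ p - r ^ p| := abs_sub _ _
        _ ≤ ε * r ^ (p - 1) := by linarith
    -- |Bε| ≤ T r^(p-1), |A0| ≤ T r^(p-1)
    have hfac : ∀ a x : ℝ, 0 < a → a ≤ T → 0 < x → r ≤ x →
        |(a + x) ^ p - x ^ p| ≤ T * r ^ (p - 1) := by
      intro a x ha haT hx hrx
      have := step x a hx ha.le hrx
      calc |(a + x) ^ p - x ^ p| = |(x + a) ^ p - x ^ p| := by rw [add_comm a x]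
        _ ≤ (1/2) * a * r ^ (p - 1) := this
        _ ≤ T * r ^ (p - 1) := by nlinarith
    have hA : |((t + r + ε) ^ p - (r + ε) ^ p) - ((t + r) ^ p - r ^ p)| ≤ ε * r ^ (p - 1) :=
      hdiff t ht0
    have hB : |((s + r + ε) ^ p - (r + ε) ^ p) - ((s + r) ^ p - r ^ p)| ≤ ε * r ^ (p - 1) :=
      hdiff s hs0
    have hBε : |(s + r + ε) ^ p - (r + ε) ^ p| ≤ T * r ^ (p - 1) := by
      have := hfac s (r + ε) hs0 (by linarith) (by linarith) (by linarith)
      convert this using 3 <;> ring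
    have hA0 : |(t + r) ^ p - r ^ p| ≤ T * r ^ (p - 1) :=
      hfac t r ht0 htT hr0 le_rfl
    have decomp :
        ((t + r + ε) ^ p - (r + ε) ^ p) * ((s + r + ε) ^ p - (r + ε) ^ p)
          - ((t + r) ^ p - r ^ p) * ((s + r) ^ p - r ^ p)
        = (((t + r + ε) ^ p - (r + ε) ^ p) - ((t + r) ^ p - r ^ p))
            * ((s + r + ε) ^ p - (r + ε) ^ p)
          + ((t + r) ^ p - r ^ p)
            * (((s + r + ε) ^ p - (r + ε) ^ p) - ((s + r) ^ p - r ^ p)) := by ring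
    have hrr : r ^ (p - 1) * r ^ (p - 1) = r ^ (2 * p - 2) := by
      rw [← Real.rpow_add hr0]; ring_nf
    calc |((t + r + ε) ^ p - (r + ε) ^ p) * ((s + r + ε) ^ p - (r + ε) ^ p)
          - ((t + r) ^ p - r ^ p) * ((s + r) ^ p - r ^ p)|
        ≤ |((t + r + ε) ^ p - (r + ε) ^ p) - ((t + r) ^ p - r ^ p)|
            * |(s + r + ε) ^ p - (r + ε) ^ p|
          + |(t + r) ^ p - r ^ p|
            * |((s + r + ε) ^ p - (r + ε) ^ p) - ((s + r) ^ p - r ^ p)| := by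
          rw [decomp]
          exact (abs_add_le _ _).trans (by rw [abs_mul, abs_mul])
      _ ≤ (ε * r ^ (p - 1)) * (T * r ^ (p - 1)) + (T * r ^ (p - 1)) * (ε * r ^ (p - 1)) := by
          gcongr <;> positivity
      _ = 2 * T * ε * r ^ (2 * p - 2) := by rw [← hrr]; ring
  -- integral bound
  have hq : (2 * p - 2 : ℝ) < -1 := by linarith
  have hint : IntegrableOn (fun r : ℝ => 2 * T * ε * r ^ (2 * p - 2)) (Set.Ioi (1:ℝ)) :=
    (integrableOn_Ioi_rpow_of_lt hq one_pos).const_mul _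
  have hval : ∫ r in Set.Ioi (1:ℝ), 2 * T * ε * r ^ (2 * p - 2)
      = 2 * T * ε * (-(1:ℝ) ^ (2 * p - 2 + 1) / (2 * p - 2 + 1)) := by
    rw [MeasureTheory.integral_const_mul, integral_Ioi_rpow_of_lt hq one_pos]
  rw [show (∫ r in Set.Ioi (1:ℝ),
      ((φ n (t + r) - φ n r) * (φ n (s + r) - φ n r)
        - ((t + r) ^ p - r ^ p) * ((s + r) ^ p - r ^ p)))
      = ∫ r in Set.Ioi (1:ℝ),
        (((t + r + ε) ^ p - (r + ε) ^ p) * ((s + r + ε) ^ p - (r + ε) ^ p)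
          - ((t + r) ^ p - r ^ p) * ((s + r) ^ p - r ^ p)) from
    MeasureTheory.setIntegral_congr_fun measurableSet_Ioi hre]
  have hbound : |∫ r in Set.Ioi (1:ℝ),
      (((t + r + ε) ^ p - (r + ε) ^ p) * ((s + r + ε) ^ p - (r + ε) ^ p)
        - ((t + r) ^ p - r ^ p) * ((s + r) ^ p - r ^ p))|
      ≤ ∫ r in Set.Ioi (1:ℝ), 2 * T * ε * r ^ (2 * p - 2) := by
    rw [← Real.norm_eq_abs]
    refine MeasureTheory.norm_integral_le_of_norm_le hint ?_
    filter_upwards [MeasureTheory.ae_restrict_mem measurableSet_Ioi] with r hr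
    rw [Real.norm_eq_abs]
    exact key r hr
  refine hbound.trans ?_
  rw [hval, Real.one_rpow]
  have e1 : (2 * p - 2 + 1 : ℝ) = -(2 - 2 * H) := by rw [hpdef]; ring
  rw [e1, neg_div_neg_eq]
  have e2 : 2 * T * ε * (1 / (2 - 2 * H)) = (T / (1 - H)) * ε := by
    have hne : (2 - 2 * H) ≠ 0 := by linarith
    have hne2 : (1 - H) ≠ 0 := ne_of_gt h1H
    field_simp
  rw [e2]
  have h6 : 0 < T / (1 - H) := div_pos hT h1H
  nlinarith [hε0]
end
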